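/- arXiv:math/0005281 — 4 statements merged into one kernel-verified Lean document; each statement's English description precedes it below -/
import Mathlib

section
/- Let G(z) be an n×k matrix with entries in 𝔽(z) of rank k. Then there exists an invertible k×k matrix R(z) with entries in 𝔽(z) such that G̃(z) = G(z)R(z) satisfies: (i) G̃(z) has entries in 𝔽[z]; (ii) G̃(z) is right prime over 𝔽[z]; (iii) G̃(z) is column reduced, with column degrees {e_1,…,e_k}. Moreover, any two n×k polynomial matrices which are right prime over 𝔽[z], column reduced, and whose columns have the same 𝔽((z))-span in 𝔽((z))^n as the columns of G(z), have the same multiset of column degrees {e_1,…,e_k}. -/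
/-!
The polynomial vectors lying in the `𝔽(z)`-column space of `G` form a saturated
`𝔽[z]`-submodule `N` of `𝔽[z]^n`. Over the PID `𝔽[z]` the quotient by `N` is finitely generated
and torsion-free, hence free, so `N` is a direct summand of rank `k`, and a basis of `N` gives a
right prime polynomial matrix with the same column space as `G`. As long as the leading column
coefficient matrix has a kernel vector, a unimodular column operation lowers the degree of a
column of maximal degree in its support, so column reduction terminates.

For uniqueness, a right prime matrix recovers its `𝔽[z]`-column module from its
`𝔽((z))`-column span. For a column reduced matrix with column degrees `e_j`, the predictable
degree property shows that the vectors of degree `< d` in that module form an `𝔽`-space of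
dimension `∑ j, (d - e_j)`, and these numbers for all `d` determine the multiset of the `e_j`.
-/

open Matrix

section ConvolutionalDefs

variable {𝔽 : Type} [Field 𝔽]

/-- The left shift `(σw)_t = w_{t+1}` on bi-infinite sequences. -/
def shiftZ {A : Type} (w : ℤ → A) : ℤ → A := fun t => w (t + 1)

/-- A set of bi-infinite sequences is shift-invariant if `σX ⊆ X`. -/
def ShiftInvariant {A : Type} (X : Set (ℤ → A)) : Prop := ∀ w ∈ X, shiftZ w ∈ X

/-- A block `β` occurs in the bi-infinite sequence `w` if `β = w_j w_{j+1} … w_{j+k-1}`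
for some `j ∈ ℤ`. -/
def BlockOccursIn {A : Type} (β : List A) (w : ℤ → A) : Prop :=
  ∃ j : ℤ, ∀ l : Fin β.length, β.get l = w (j + ((l : ℕ) : ℤ))

/-- A block occurs in some element of the set `X`. -/
def OccursInSome {A : Type} (β : List A) (X : Set (ℤ → A)) : Prop :=
  ∃ w ∈ X, BlockOccursIn β w

/-- A set of sequences is irreducible if any ordered pair of blocks occurring in it can be
completed to a single block occurring in it. -/
def IrreducibleShift {A : Type} (X : Set (ℤ → A)) : Prop :=
  ∀ β γ : List A, OccursInSome β X → OccursInSome γ X →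
    ∃ μ : List A, OccursInSome (β ++ μ ++ γ) X

/-- A subset of a module is `𝔽`-linear. -/
def IsLinearSet' (𝔽 : Type) [Field 𝔽] {M : Type} [AddCommGroup M] [Module 𝔽 M]
    (C : Set M) : Prop :=
  (0 : M) ∈ C ∧ (∀ x ∈ C, ∀ y ∈ C, x + y ∈ C) ∧ ∀ (c : 𝔽), ∀ x ∈ C, c • x ∈ C

/-- A behavior `B` is complete if membership can be decided on finite windows:
any `w` which agrees on every finite interval with some element of `B` lies in `B`. -/
def CompleteBehavior {A : Type} (B : Set (ℤ → A)) : Prop :=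
  ∀ w : ℤ → A, (∀ a b : ℤ, ∃ x ∈ B, ∀ t : ℤ, a ≤ t → t ≤ b → x t = w t) → w ∈ B

/-- A behavior `B ⊆ (𝔽^n)^ℤ` is controllable if there is `ℓ ≥ 0` such that any past of a
trajectory of `B` can be concatenated, after a lag of length `ℓ`, with any future of a
trajectory of `B`. -/
def ControllableBehavior {A : Type} (B : Set (ℤ → A)) : Prop :=
  ∃ ℓ : ℕ, ∀ w ∈ B, ∀ w' ∈ B, ∀ j : ℤ, ∃ w'' ∈ B,
    (∀ t : ℤ, t ≤ j → w'' t = w t) ∧ (∀ t : ℤ, j + (ℓ : ℤ) ≤ t → w'' t = w' t)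

/-- The operator `G(σ)` associated to a Laurent-polynomial matrix `G(z) = Σ_i G_i z^i`:
`(G(σ)m)_t = Σ_i G_i m_{t+i}`. -/
noncomputable def lSigma {n k : ℕ} (G : Matrix (Fin n) (Fin k) (LaurentPolynomial 𝔽))
    (m : ℤ → Fin k → 𝔽) : ℤ → Fin n → 𝔽 :=
  fun t a => ∑ b : Fin k, (G a b).coeff.sum fun i c => c * m (t + i) b

/-- The operator `P(σ)` associated to a polynomial matrix, acting on two-sided sequences. -/
noncomputable def pSigma {n k : ℕ} (P : Matrix (Fin n) (Fin k) (Polynomial 𝔽))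
    (w : ℤ → Fin k → 𝔽) : ℤ → Fin n → 𝔽 :=
  fun t a => ∑ b : Fin k, (P a b).sum fun i c => c * w (t + (i : ℤ)) b

/-- The operator `P(σ)` associated to a polynomial matrix, acting on one-sided sequences. -/
noncomputable def pSigmaPlus {n k : ℕ} (P : Matrix (Fin n) (Fin k) (Polynomial 𝔽))
    (w : ℕ → Fin k → 𝔽) : ℕ → Fin n → 𝔽 :=
  fun t a => ∑ b : Fin k, (P a b).sum fun i c => c * w (t + i) b

/-- View a vector of formal Laurent series as a bi-infinite sequence. -/
def lsToSeq {n : ℕ} (v : Fin n → LaurentSeries 𝔽) : ℤ → Fin n → 𝔽 :=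
  fun t a => (v a).coeff t

/-- View a vector of Laurent polynomials as a (finite-support) bi-infinite sequence. -/
def lpToSeq {n : ℕ} (v : Fin n → LaurentPolynomial 𝔽) : ℤ → Fin n → 𝔽 :=
  fun t a => (v a).coeff t

/-- The pairing `(w,v) = Σ_i ⟨w_i, v_i⟩` between a bi-infinite sequence and a finite-support
(Laurent polynomial) vector. -/
noncomputable def seqPairing {n : ℕ} (w : ℤ → Fin n → 𝔽) (v : Fin n → LaurentPolynomial 𝔽) : 𝔽 :=
  ∑ a : Fin n, (v a).coeff.sum fun i c => w i a * c

/-- The `j`-th column degree of a polynomial matrix. -/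
def colDeg {n k : ℕ} (G : Matrix (Fin n) (Fin k) (Polynomial 𝔽)) (j : Fin k) : ℕ :=
  Finset.univ.sup fun i => (G i j).natDegree

/-- The `i`-th row degree of a polynomial matrix. -/
def rowDeg {r n : ℕ} (P : Matrix (Fin r) (Fin n) (Polynomial 𝔽)) (i : Fin r) : ℕ :=
  Finset.univ.sup fun j => (P i j).natDegree

/-- A polynomial `n×k` matrix is column reduced if the constant matrix of leading column
coefficients has rank `k`. -/
def ColumnReduced {n k : ℕ} (G : Matrix (Fin n) (Fin k) (Polynomial 𝔽)) : Prop :=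
  Matrix.rank (Matrix.of fun i j => (G i j).coeff (colDeg G j)) = k

/-- A polynomial `r×n` matrix is row reduced if the constant matrix of leading row
coefficients has rank `r`. -/
def RowReduced {r n : ℕ} (P : Matrix (Fin r) (Fin n) (Polynomial 𝔽)) : Prop :=
  Matrix.rank (Matrix.of fun i j => (P i j).coeff (rowDeg P i)) = r

/-- A matrix over a commutative ring is right prime if it has a left inverse over the ring. -/
def RightPrime {R : Type} [CommRing R] {m l : Type} [Fintype m] [Fintype l] [DecidableEq l]
    (G : Matrix m l R) : Prop :=
  ∃ L : Matrix l m R, L * G = 1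

/-- A matrix over a commutative ring is left prime if it has a right inverse over the ring. -/
def LeftPrime {R : Type} [CommRing R] {m l : Type} [Fintype m] [Fintype l] [DecidableEq m]
    (P : Matrix m l R) : Prop :=
  ∃ Q : Matrix l m R, P * Q = 1

end ConvolutionalDefs

open scoped RatFunc

section ColumnSpan

variable {R : Type} [CommRing R] {m n l : Type} [Fintype n]

theorem Matrix.exists_mul_eq_of_span_range_transpose_le {A : Matrix m n R} {B : Matrix m l R}
    (h : Submodule.span R (Set.range Bᵀ) ≤ Submodule.span R (Set.range Aᵀ)) :
    ∃ C : Matrix n l R, A * C = B := by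
  have hcol (j : l) : Bᵀ j ∈ LinearMap.range A.mulVecLin :=
    A.range_mulVecLin ▸ h (Submodule.subset_span (Set.mem_range_self j))
  choose c hc using hcol
  refine ⟨(Matrix.of c)ᵀ, Matrix.ext fun i j => ?_⟩
  simpa [Matrix.mul_apply, Matrix.mulVec, dotProduct] using congrFun (hc j) i

theorem Matrix.span_range_transpose_mul_of_isUnit [DecidableEq n] (A : Matrix m n R)
    {U : Matrix n n R} (hU : IsUnit U) :
    Submodule.span R (Set.range (A * U)ᵀ) = Submodule.span R (Set.range Aᵀ) := by
  have hsurj : LinearMap.range U.mulVecLin = ⊤ :=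
    LinearMap.range_eq_top.mpr (Matrix.mulVec_surjective_iff_isUnit.mpr hU)
  change Submodule.span R (Set.range (A * U).col) = Submodule.span R (Set.range A.col)
  rw [← Matrix.range_mulVecLin, ← Matrix.range_mulVecLin, Matrix.mulVecLin_mul,
    LinearMap.range_comp_of_range_eq_top _ hsurj]

variable [Fintype m] [Fintype l] [DecidableEq n]

theorem RightPrime.mul_isUnit {A : Matrix m n R} (hA : RightPrime A) {U : Matrix n n R}
    (hU : IsUnit U) : RightPrime (A * U) := by
  obtain ⟨L, hL⟩ := hA
  refine ⟨U⁻¹ * L, ?_⟩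
  rw [Matrix.mul_assoc, ← Matrix.mul_assoc L, hL, Matrix.one_mul,
    Matrix.nonsing_inv_mul _ ((Matrix.isUnit_iff_isUnit_det U).mp hU)]

theorem RightPrime.exists_ne_zero [Nontrivial R] {A : Matrix m n R} (hA : RightPrime A) (j : n) :
    ∃ i, A i j ≠ 0 := by
  obtain ⟨L, hL⟩ := hA
  by_contra! h
  have := congrFun (congrFun hL j) j
  simp [Matrix.mul_apply, h] at this

/-- If `A W = B` over `S` and `L A = 1` over `R`, then already `B = A (L B)`. -/
theorem RightPrime.range_mulVecLin_le {S : Type} [CommRing S] {f : R →+* S}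
    (hf : Function.Injective f) {A : Matrix m n R} (hA : RightPrime A) {B : Matrix m l R}
    (h : Submodule.span S (Set.range (B.map f)ᵀ) ≤ Submodule.span S (Set.range (A.map f)ᵀ)) :
    LinearMap.range B.mulVecLin ≤ LinearMap.range A.mulVecLin := by
  obtain ⟨L, hL⟩ := hA
  obtain ⟨W, hW⟩ := Matrix.exists_mul_eq_of_span_range_transpose_le h
  have hB : A * (L * B) = B := Matrix.map_injective hf <| by
    change (A * (L * B)).map f = B.map f
    rw [Matrix.map_mul, Matrix.map_mul, ← hW, ← Matrix.mul_assoc, ← Matrix.mul_assoc,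
      Matrix.mul_assoc (A.map f), ← Matrix.map_mul, hL, Matrix.map_one f (map_zero f) (map_one f),
      Matrix.mul_one]
  rw [← hB, Matrix.mulVecLin_mul, LinearMap.range_comp]
  exact LinearMap.map_le_range

end ColumnSpan

section IntegralVectors

variable (A : Type) {K : Type} [CommRing A] [Field K] [Algebra A K] {ι : Type}

/-- The vectors of `A^ι` which lie in the `K`-subspace `V` of `K^ι`. -/
def integralVectors (V : Submodule K (ι → K)) : Submodule A (ι → A) :=
  LinearMap.ker ((V.mkQ.restrictScalars A).comp ((Algebra.linearMap A K).compLeft ι))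

variable {A}

theorem mem_integralVectors {V : Submodule K (ι → K)} {v : ι → A} :
    v ∈ integralVectors A V ↔ (fun i => algebraMap A K (v i)) ∈ V := by
  simp [integralVectors, Submodule.Quotient.mk_eq_zero]; rfl

variable [IsFractionRing A K] {ι' : Type} {V : Submodule K (ι → K)} (b : Module.Basis ι' A (integralVectors A V))

theorem linearIndependent_algebraMap_basis_integralVectors :
    LinearIndependent K fun j i => algebraMap A K ((b j : ι → A) i) := by
  have hinj : Function.Injective
      ((Algebra.linearMap A K).compLeft ι ∘ₗ (integralVectors A V).subtype) :=
    fun x y hxy => Subtype.ext <| funext fun i => IsFractionRing.injective A K (congrFun hxy i)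
  exact (b.linearIndependent.map' _ (LinearMap.ker_eq_bot.mpr hinj)).localization K
    (nonZeroDivisors A)

variable [IsDomain A]

/-- Every vector of `V` becomes integral after clearing denominators. -/
theorem span_algebraMap_basis_integralVectors [Fintype ι] :
    Submodule.span K (Set.range fun j i => algebraMap A K ((b j : ι → A) i)) = V := by
  refine le_antisymm (Submodule.span_le.mpr ?_) fun v hv => ?_
  · rintro _ ⟨j, rfl⟩
    exact mem_integralVectors.mp (b j).2
  obtain ⟨⟨a, ha⟩, hint⟩ := IsLocalization.exist_integer_multiples (nonZeroDivisors A)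
    Finset.univ v
  choose w hw using fun i => hint i (Finset.mem_univ i)
  have hwV : w ∈ integralVectors A V := mem_integralVectors.mpr <| by
    convert V.smul_mem (algebraMap A K a) hv using 1
    ext i
    simp [hw, Algebra.smul_def]
  set ψ := (Algebra.linearMap A K).compLeft ι ∘ₗ (integralVectors A V).subtype
  have hψ : ψ ⟨w, hwV⟩ ∈ Submodule.span A (Set.range (ψ ∘ b)) := by
    rw [Set.range_comp, ← Submodule.map_span, b.span_eq]
    exact Submodule.mem_map_of_mem trivial
  have ha' : algebraMap A K a ≠ 0 :=
    IsLocalization.to_map_ne_zero_of_mem_nonZeroDivisors _ le_rfl ha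
  have hv : v = (algebraMap A K a)⁻¹ • ψ ⟨w, hwV⟩ := by
    ext i
    simp [ψ, hw, Algebra.smul_def, ha']
  rw [hv]
  exact Submodule.smul_mem _ _ (Submodule.span_le_restrictScalars A K _ hψ)

instance : Module.IsTorsionFree A ((ι → A) ⧸ integralVectors A V) :=
  have : Module.IsTorsionFree A K := FaithfulSMul.to_isTorsionFree A K
  have : Module.IsTorsionFree A ((ι → K) ⧸ V) := Module.IsTorsionFree.trans K
  let f := (V.mkQ.restrictScalars A).comp ((Algebra.linearMap A K).compLeft ι)
  Function.Injective.moduleIsTorsionFree ((LinearMap.ker f).liftQ f le_rfl)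
    (LinearMap.ker_eq_bot.mp (Submodule.ker_liftQ_eq_bot _ _ le_rfl le_rfl)) (map_smul _)

/-- The quotient is finitely generated and torsion-free over a PID, hence free, so the inclusion
splits. -/
theorem exists_leftInverse_subtype_integralVectors [IsPrincipalIdealRing A] [Finite ι] :
    ∃ r : (ι → A) →ₗ[A] integralVectors A V, r ∘ₗ (integralVectors A V).subtype = LinearMap.id := by
  set N := integralVectors A V
  have hsplit := (LinearMap.exact_subtype_mkQ N).split_tfae N.injective_subtype N.mkQ_surjective
  exact (hsplit.out 0 1).mp (Module.projective_lifting_property N.mkQ LinearMap.id N.mkQ_surjective)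

end IntegralVectors

section Existence

variable {A K : Type} [CommRing A] [IsDomain A] [IsPrincipalIdealRing A] [Field K] [Algebra A K]
  [IsFractionRing A K]

/-- The columns of `G₀` form a basis of the integral vectors in the column space of `G`. -/
theorem Matrix.exists_isUnit_mul_eq_map_rightPrime {m : Type} [Fintype m] {k : ℕ}
    (G : Matrix m (Fin k) K) (hG : G.rank = k) :
    ∃ (R : Matrix (Fin k) (Fin k) K) (G₀ : Matrix m (Fin k) A),
      IsUnit R ∧ G * R = G₀.map (algebraMap A K) ∧ RightPrime G₀ := by
  classical
  set V := Submodule.span K (Set.range Gᵀ)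
  obtain ⟨r, b⟩ := (integralVectors A V).basisOfPid (Pi.basisFun A m)
  have hli := linearIndependent_algebraMap_basis_integralVectors b
  have hspan := span_algebraMap_basis_integralVectors b
  obtain rfl : r = k := by
    rw [← hG, Matrix.rank_eq_finrank_span_cols]
    change r = Module.finrank K V
    rw [← hspan, finrank_span_eq_card hli, Fintype.card_fin]
  set G₀ := LinearMap.toMatrix' ((integralVectors A V).subtype ∘ₗ b.equivFun.symm.toLinearMap)
  have hcols : (G₀.map (algebraMap A K))ᵀ = fun j i => algebraMap A K ((b j : m → A) i) := by
    ext j i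
    simp [G₀, LinearMap.toMatrix'_apply, Pi.single_apply]
  have hrp : RightPrime G₀ := by
    obtain ⟨p, hp⟩ := exists_leftInverse_subtype_integralVectors (A := A) (V := V)
    refine ⟨LinearMap.toMatrix' (b.equivFun.toLinearMap ∘ₗ p), ?_⟩
    rw [← LinearMap.toMatrix'_comp, LinearMap.comp_assoc, ← LinearMap.comp_assoc _ _ p, hp]
    simp
  obtain ⟨R, hR⟩ := Matrix.exists_mul_eq_of_span_range_transpose_le (A := G)
    (B := G₀.map (algebraMap A K)) (by rw [hcols, hspan])
  have hinj : Function.Injective (G₀.map (algebraMap A K)).mulVec :=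
    Matrix.mulVec_injective_iff.mpr (by rw [Matrix.col, hcols]; exact hli)
  refine ⟨R, G₀, Matrix.mulVec_injective_iff_isUnit.mp fun x y hxy => hinj ?_, hR, hrp⟩
  rw [← hR, ← Matrix.mulVec_mulVec, ← Matrix.mulVec_mulVec, hxy]

end Existence

theorem Multiset.map_univ_eq_of_sum_tsub_eq {ι : Type} [Fintype ι] {e f : ι → ℕ}
    (h : ∀ d, ∑ i, (d - e i) = ∑ i, (d - f i)) :
    Multiset.map e Finset.univ.val = Multiset.map f Finset.univ.val := by
  classical
  -- `d ↦ ∑ i, (d - g i)` is piecewise linear, with a kink of size `#{i | g i = d}` at `d`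
  have hkink : ∀ (g : ι → ℕ) (d : ℕ), ∑ i, (d + 1 - g i) + ∑ i, (d - 1 - g i) =
      2 * ∑ i, (d - g i) + Multiset.count d (Multiset.map g Finset.univ.val) := by
    intro g d
    rw [Multiset.count_map, ← Finset.filter_val, ← Finset.card_def, Finset.card_filter,
      Finset.mul_sum, ← Finset.sum_add_distrib, ← Finset.sum_add_distrib]
    refine Finset.sum_congr rfl fun i _ => ?_
    split_ifs <;> omega
  ext d
  have he := hkink e d
  have hf := hkink f d
  rw [h, h, h] at he
  omega

section ColumnDegrees

open Polynomial

variable {𝔽 : Type} [Field 𝔽] {n k : ℕ}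

def leadingColCoeff (M : Matrix (Fin n) (Fin k) 𝔽[X]) : Matrix (Fin n) (Fin k) 𝔽 :=
  Matrix.of fun i j => (M i j).coeff (colDeg M j)

theorem columnReduced_iff_injective_mulVec {M : Matrix (Fin n) (Fin k) 𝔽[X]} :
    ColumnReduced M ↔ Function.Injective (leadingColCoeff M).mulVec := by
  rw [Matrix.mulVec_injective_iff, linearIndependent_iff_card_eq_finrank_span, Set.finrank,
    ← Matrix.rank_eq_finrank_span_cols, Fintype.card_fin, eq_comm]
  rfl

theorem natDegree_le_colDeg (M : Matrix (Fin n) (Fin k) 𝔽[X]) (i : Fin n) (j : Fin k) :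
    (M i j).natDegree ≤ colDeg M j :=
  Finset.le_sup (f := fun i => (M i j).natDegree) (Finset.mem_univ i)

theorem colDeg_lt_of_degree_lt {M : Matrix (Fin n) (Fin k) 𝔽[X]} {j : Fin k} {D : ℕ}
    (hne : ∃ i, M i j ≠ 0) (h : ∀ i, (M i j).degree < D) : colDeg M j < D := by
  obtain ⟨i₀, hi₀⟩ := hne
  have hD : 0 < D := ((natDegree_lt_iff_degree_lt hi₀).mpr (h i₀)).trans_le' (Nat.zero_le _)
  refine (Finset.sup_lt_iff (by simpa using hD)).mpr fun i _ => ?_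
  by_cases hi : M i j = 0
  · simpa [hi] using hD
  · exact (natDegree_lt_iff_degree_lt hi).mpr (h i)

variable (M : Matrix (Fin n) (Fin k) 𝔽[X]) {w : Fin k → 𝔽[X]} {D : ℕ}

theorem natDegree_mulVec_le (hw : ∀ j, w j ≠ 0 → (w j).natDegree + colDeg M j ≤ D) (i : Fin n) :
    ((M *ᵥ w) i).natDegree ≤ D := by
  simp only [Matrix.mulVec, dotProduct]
  refine natDegree_sum_le_of_forall_le _ _ fun j _ => ?_
  by_cases hj : w j = 0
  · simp [hj]
  · have := natDegree_le_colDeg M i j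
    have := hw j hj
    exact natDegree_mul_le.trans (by omega)

theorem coeff_mulVec_eq_leadingColCoeff_mulVec
    (hw : ∀ j, w j ≠ 0 → (w j).natDegree + colDeg M j ≤ D) (i : Fin n) :
    ((M *ᵥ w) i).coeff D = (leadingColCoeff M *ᵥ fun j => (w j).coeff (D - colDeg M j)) i := by
  simp only [Matrix.mulVec, dotProduct, finsetSum_coeff]
  refine Finset.sum_congr rfl fun j _ => ?_
  by_cases hj : w j = 0
  · simp [hj]
  · have := hw j hj
    rw [leadingColCoeff, Matrix.of_apply, ← coeff_mul_add_eq_of_natDegree_le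
      (natDegree_le_colDeg M i j) (by omega : (w j).natDegree ≤ D - colDeg M j)]
    congr 1
    omega

theorem mulVec_mem_degreeLT {d : ℕ} (hw : ∀ j, w j ∈ degreeLT 𝔽 (d - colDeg M j)) (i : Fin n) :
    (M *ᵥ w) i ∈ degreeLT 𝔽 d := by
  simp only [Matrix.mulVec, dotProduct]
  refine Submodule.sum_mem _ fun j _ => mem_degreeLT.mpr ?_
  by_cases hj : M i j * w j = 0
  · simp [hj]
  have hwj := mem_degreeLT.mp (hw j)
  rw [← natDegree_lt_iff_degree_lt (right_ne_zero_of_mul hj)] at hwj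
  have := natDegree_le_colDeg M i j
  exact (natDegree_lt_iff_degree_lt hj).mp (natDegree_mul_le.trans_lt (by omega))

variable {M}

/-- The predictable degree property. -/
theorem ColumnReduced.mem_degreeLT_of_mulVec_mem_degreeLT (hM : ColumnReduced M) {d : ℕ}
    (h : ∀ i, (M *ᵥ w) i ∈ degreeLT 𝔽 d) (j : Fin k) : w j ∈ degreeLT 𝔽 (d - colDeg M j) := by
  classical
  by_contra hj
  have hwj : w j ≠ 0 := fun h0 => hj (h0 ▸ Submodule.zero_mem _)
  set S := Finset.univ.filter fun j => w j ≠ 0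
  have hjS : j ∈ S := by simp [S, hwj]
  set D := S.sup fun j => (w j).natDegree + colDeg M j
  have hw : ∀ j, w j ≠ 0 → (w j).natDegree + colDeg M j ≤ D := fun j hj =>
    Finset.le_sup (f := fun j => (w j).natDegree + colDeg M j) (by simp [S, hj])
  have hdD : d ≤ D := by
    rw [mem_degreeLT, ← natDegree_lt_iff_degree_lt hwj] at hj
    have := hw j hwj
    omega
  obtain ⟨j₀, hj₀S, hj₀⟩ := S.exists_mem_eq_sup ⟨j, hjS⟩ fun j => (w j).natDegree + colDeg M j
  -- the coefficients of degree `D` cancel, so the leading coefficients of `w` lie in the kernel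
  have hker : leadingColCoeff M *ᵥ (fun j => (w j).coeff (D - colDeg M j)) = 0 := funext fun i => by
    rw [← coeff_mulVec_eq_leadingColCoeff_mulVec M hw i]
    exact coeff_eq_zero_of_degree_lt ((mem_degreeLT.mp (h i)).trans_le (by exact_mod_cast hdD))
  have h0 := congrFun (columnReduced_iff_injective_mulVec.mp hM
    (hker.trans (Matrix.mulVec_zero _).symm)) j₀
  have hj₀w : w j₀ ≠ 0 := by simpa [S] using hj₀S
  rw [Pi.zero_apply, show D - colDeg M j₀ = (w j₀).natDegree by omega] at h0
  exact hj₀w (leadingCoeff_eq_zero.mp h0)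

theorem ColumnReduced.injective_mulVec (hM : ColumnReduced M) : Function.Injective M.mulVec := by
  intro v w hvw
  ext1 j
  have h : ∀ i, (M *ᵥ (v - w)) i ∈ degreeLT 𝔽 0 := fun i => by
    simp [Matrix.mulVec_sub, hvw]
  simpa [mem_degreeLT, sub_eq_zero] using hM.mem_degreeLT_of_mulVec_mem_degreeLT h j

variable (M) in
noncomputable def mulVecDegreeLT (d : ℕ) :
    (∀ j, degreeLT 𝔽 (d - colDeg M j)) →ₗ[𝔽] Fin n → 𝔽[X] :=
  M.mulVecLin.restrictScalars 𝔽 ∘ₗ LinearMap.piMap fun j => (degreeLT 𝔽 (d - colDeg M j)).subtype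

theorem ColumnReduced.range_mulVecDegreeLT (hM : ColumnReduced M) (d : ℕ) :
    LinearMap.range (mulVecDegreeLT M d) = (LinearMap.range M.mulVecLin).restrictScalars 𝔽 ⊓
      Submodule.pi Set.univ fun _ => degreeLT 𝔽 d := by
  ext v
  constructor
  · rintro ⟨w, rfl⟩
    exact ⟨⟨_, rfl⟩, fun i _ => mulVec_mem_degreeLT M (fun j => (w j).2) i⟩
  · rintro ⟨⟨w, rfl⟩, hv⟩
    exact ⟨fun j => ⟨w j, hM.mem_degreeLT_of_mulVec_mem_degreeLT (fun i => hv i trivial) j⟩, rfl⟩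

theorem ColumnReduced.finrank_range_mulVecDegreeLT (hM : ColumnReduced M) (d : ℕ) :
    Module.finrank 𝔽 (LinearMap.range (mulVecDegreeLT M d)) = ∑ j, (d - colDeg M j) := by
  have hinj : Function.Injective (mulVecDegreeLT M d) :=
    hM.injective_mulVec.comp fun u v huv => funext fun j => Subtype.ext (congrFun huv j)
  rw [LinearMap.finrank_range_of_inj hinj, Module.finrank_pi_fintype]
  simp [(degreeLTEquiv 𝔽 _).finrank_eq]

theorem ColumnReduced.map_colDeg_eq {M₁ M₂ : Matrix (Fin n) (Fin k) 𝔽[X]}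
    (h₁ : ColumnReduced M₁) (h₂ : ColumnReduced M₂)
    (h : LinearMap.range M₁.mulVecLin = LinearMap.range M₂.mulVecLin) :
    Multiset.map (colDeg M₁) Finset.univ.val = Multiset.map (colDeg M₂) Finset.univ.val :=
  Multiset.map_univ_eq_of_sum_tsub_eq fun d => by
    rw [← h₁.finrank_range_mulVecDegreeLT, ← h₂.finrank_range_mulVecDegreeLT,
      h₁.range_mulVecDegreeLT, h₂.range_mulVecDegreeLT, h]

end ColumnDegrees

section ColumnReduction

open Polynomial

variable {𝔽 : Type} [Field 𝔽] {n k : ℕ} {M : Matrix (Fin n) (Fin k) 𝔽[X]}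

/-- If `c` is a kernel vector of the leading column coefficient matrix and `j₀` a column of
maximal degree `D` in its support, adding `c l z^(D - colDeg M l)` times column `l` to column `j₀`
cancels the coefficients of degree `D` in column `j₀`. -/
theorem exists_isUnit_degree_mul_lt_colDeg (hM : ¬ ColumnReduced M) :
    ∃ (U : Matrix (Fin k) (Fin k) 𝔽[X]) (j₀ : Fin k), IsUnit U ∧
      (∀ j ≠ j₀, ∀ i, (M * U) i j = M i j) ∧ ∀ i, ((M * U) i j₀).degree < colDeg M j₀ := by
  classical
  obtain ⟨c, hc, hc0⟩ : ∃ c, leadingColCoeff M *ᵥ c = 0 ∧ c ≠ 0 := by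
    rw [columnReduced_iff_injective_mulVec] at hM
    have := mt (injective_iff_map_eq_zero (leadingColCoeff M).mulVecLin).mpr hM
    push Not at this
    exact this
  set S := Finset.univ.filter fun l => c l ≠ 0
  obtain ⟨j₀, hj₀S, hj₀⟩ := S.exists_mem_eq_sup
    (by simpa [S, Finset.filter_nonempty_iff, Function.ne_iff] using hc0) (colDeg M)
  set D := colDeg M j₀
  set w : Fin k → 𝔽[X] := fun l => C (c l) * X ^ (D - colDeg M l)
  have hw : ∀ l, w l ≠ 0 → (w l).natDegree + colDeg M l ≤ D := fun l hl => by
    have hcl : c l ≠ 0 := fun h => hl (by simp [w, h])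
    have : (w l).natDegree ≤ D - colDeg M l := natDegree_C_mul_X_pow_le _ _
    have : colDeg M l ≤ D := hj₀ ▸ Finset.le_sup (f := colDeg M) (by simp [S, hcl])
    omega
  refine ⟨(1 : Matrix (Fin k) (Fin k) 𝔽[X]).updateCol j₀ w, j₀, ?_, fun j hj i => ?_, fun i => ?_⟩
  · have hdet := Matrix.det_updateCol_sum (1 : Matrix (Fin k) (Fin k) 𝔽[X]) j₀ w
    simp only [Matrix.one_apply, smul_eq_mul, mul_ite, mul_one, mul_zero, Finset.sum_ite_eq,
      Finset.mem_univ, if_true, Matrix.det_one] at hdet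
    rw [Matrix.isUnit_iff_isUnit_det, hdet]
    simpa [w, D, S] using hj₀S
  · rw [Matrix.mul_updateCol, Matrix.mul_one, Matrix.updateCol_ne hj]
  · rw [Matrix.mul_updateCol, Matrix.mul_one, Matrix.updateCol_self, degree_lt_iff_coeff_zero]
    intro t ht
    rcases ht.eq_or_lt with rfl | ht
    · rw [coeff_mulVec_eq_leadingColCoeff_mulVec M hw]
      simpa [w, coeff_C_mul_X_pow] using congrFun hc i
    · exact coeff_eq_zero_of_natDegree_lt ((natDegree_mulVec_le M hw i).trans_lt ht)

theorem RightPrime.exists_isUnit_sum_colDeg_mul_lt (hrp : RightPrime M) (hM : ¬ ColumnReduced M) :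
    ∃ U : Matrix (Fin k) (Fin k) 𝔽[X], IsUnit U ∧ ∑ j, colDeg (M * U) j < ∑ j, colDeg M j := by
  obtain ⟨U, j₀, hU, hne, hlt⟩ := exists_isUnit_degree_mul_lt_colDeg hM
  have hlt₀ : colDeg (M * U) j₀ < colDeg M j₀ :=
    colDeg_lt_of_degree_lt ((hrp.mul_isUnit hU).exists_ne_zero j₀) hlt
  refine ⟨U, hU, Finset.sum_lt_sum (fun j _ => ?_) ⟨j₀, Finset.mem_univ _, hlt₀⟩⟩
  by_cases hj : j = j₀
  · exact hj ▸ hlt₀.le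
  · simp only [colDeg, hne j hj, le_rfl]

theorem RightPrime.exists_isUnit_columnReduced_mul (hrp : RightPrime M) :
    ∃ U : Matrix (Fin k) (Fin k) 𝔽[X], IsUnit U ∧ ColumnReduced (M * U) := by
  induction hs : ∑ j, colDeg M j using Nat.strong_induction_on generalizing M with
  | _ s ih =>
    by_cases hM : ColumnReduced M
    · exact ⟨1, isUnit_one, by rwa [Matrix.mul_one]⟩
    obtain ⟨U, hU, hlt⟩ := hrp.exists_isUnit_sum_colDeg_mul_lt hM
    obtain ⟨V, hV, hcr⟩ := ih _ (hs ▸ hlt) (hrp.mul_isUnit hU) rfl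
    exact ⟨U * V, hU.mul hV, by rwa [← Matrix.mul_assoc]⟩

end ColumnReduction

theorem minimal_basic_encoder_general
    (𝔽 : Type) [Field 𝔽] (n k : ℕ)
    (G : Matrix (Fin n) (Fin k) (RatFunc 𝔽)) (hG : G.rank = k) :
    ∃ (R : Matrix (Fin k) (Fin k) (RatFunc 𝔽))
      (G' : Matrix (Fin n) (Fin k) (Polynomial 𝔽)),
      IsUnit R ∧
      G * R = G'.map (algebraMap (Polynomial 𝔽) (RatFunc 𝔽)) ∧
      RightPrime G' ∧
      ColumnReduced G' ∧
      ∀ G₁ : Matrix (Fin n) (Fin k) (Polynomial 𝔽),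
        RightPrime G₁ → ColumnReduced G₁ →
        Submodule.span (LaurentSeries 𝔽)
            (Set.range (G₁.map (algebraMap (Polynomial 𝔽) (LaurentSeries 𝔽)))ᵀ) =
          Submodule.span (LaurentSeries 𝔽)
            (Set.range (G.map (algebraMap (RatFunc 𝔽) (LaurentSeries 𝔽)))ᵀ) →
        Multiset.map (colDeg G₁) Finset.univ.val = Multiset.map (colDeg G') Finset.univ.val := by
  obtain ⟨R, G₀, hR, hGR, hrp₀⟩ := G.exists_isUnit_mul_eq_map_rightPrime (A := Polynomial 𝔽) hG
  obtain ⟨U, hU, hcr⟩ := hrp₀.exists_isUnit_columnReduced_mul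
  set ι := algebraMap (Polynomial 𝔽) (RatFunc 𝔽)
  set ψ := algebraMap (RatFunc 𝔽) (LaurentSeries 𝔽)
  have hRU : IsUnit (R * U.map ι) := hR.mul (hU.map ι.mapMatrix)
  have hGRU : G * (R * U.map ι) = (G₀ * U).map ι := by
    rw [← Matrix.mul_assoc, hGR, Matrix.map_mul]
  have hrp : RightPrime (G₀ * U) := hrp₀.mul_isUnit hU
  refine ⟨R * U.map ι, G₀ * U, hRU, hGRU, hrp, hcr, fun G₁ hrp₁ hcr₁ hspan₁ => ?_⟩
  rw [IsScalarTower.algebraMap_eq (Polynomial 𝔽) (RatFunc 𝔽) (LaurentSeries 𝔽)] at hspan₁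
  have hspan : Submodule.span (LaurentSeries 𝔽) (Set.range ((G₀ * U).map (ψ.comp ι))ᵀ) =
      Submodule.span (LaurentSeries 𝔽) (Set.range (G₁.map (ψ.comp ι))ᵀ) := by
    rw [hspan₁, RingHom.coe_comp, ← Matrix.map_map, ← hGRU, Matrix.map_mul]
    exact Matrix.span_range_transpose_mul_of_isUnit _ (hRU.map ψ.mapMatrix)
  have hinj : Function.Injective (ψ.comp ι) :=
    ψ.injective.comp (IsFractionRing.injective (Polynomial 𝔽) (RatFunc 𝔽))
  exact hcr₁.map_colDeg_eq hcr (le_antisymm (hrp.range_mulVecLin_le hinj hspan.ge)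
    (hrp₁.range_mulVecLin_le hinj hspan.le))

/-- Every rational encoder of rank `k` is equivalent, via an invertible rational
matrix `R`, to a polynomial, right prime, column reduced encoder; and every polynomial, right
prime, column reduced matrix whose columns have the same `𝔽((z))`-span has the same multiset
of column degrees. -/
theorem minimal_basic_encoder
    (𝔽 : Type) [Field 𝔽] [Fintype 𝔽] (n k : ℕ)
    (G : Matrix (Fin n) (Fin k) (RatFunc 𝔽)) (hG : G.rank = k) :
    ∃ (R : Matrix (Fin k) (Fin k) (RatFunc 𝔽))
      (G' : Matrix (Fin n) (Fin k) (Polynomial 𝔽)),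
      IsUnit R ∧
      G * R = G'.map (algebraMap (Polynomial 𝔽) (RatFunc 𝔽)) ∧
      RightPrime G' ∧
      ColumnReduced G' ∧
      ∀ G₁ : Matrix (Fin n) (Fin k) (Polynomial 𝔽),
        RightPrime G₁ → ColumnReduced G₁ →
        Submodule.span (LaurentSeries 𝔽)
            (Set.range (G₁.map (algebraMap (Polynomial 𝔽) (LaurentSeries 𝔽)))ᵀ) =
          Submodule.span (LaurentSeries 𝔽)
            (Set.range (G.map (algebraMap (RatFunc 𝔽) (LaurentSeries 𝔽)))ᵀ) →
        Multiset.map (colDeg G₁) Finset.univ.val = Multiset.map (colDeg G') Finset.univ.val :=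
  minimal_basic_encoder_general 𝔽 n k G hG
end

section
/- Let C ⊆ 𝔽((z))^n ⊆ (𝔽^n)^ℤ be a nonzero 𝔽((z))-subspace admitting a basis of vectors in 𝔽(z)^n. Then C is not a closed subset of (𝔽^n)^ℤ, but its topological closure C̄ is 𝔽-linear, compact, irreducible, and shift-invariant. -/
open Matrix
open scoped RatFunc

section ConvolutionalDefs

variable {𝔽 : Type} [Field 𝔽]

/-- A subset of a module is `𝔽`-linear. -/
def IsFLinearSet (𝔽 : Type) [Field 𝔽] {M : Type} [AddCommGroup M] [Module 𝔽 M]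
    (C : Set M) : Prop :=
  (0 : M) ∈ C ∧ (∀ x ∈ C, ∀ y ∈ C, x + y ∈ C) ∧ ∀ (c : 𝔽), ∀ x ∈ C, c • x ∈ C

end ConvolutionalDefs

/-!
Clearing denominators, `C` is spanned by polynomial vectors `pⱼ`. A codeword `∑ cⱼ pⱼ` agrees
at all times `t ≤ b` with the codeword `∑ (cⱼ truncated above b) pⱼ`, which has finite support
because a Laurent series has support bounded below. So the finitely supported codewords are
dense in the image `S` of `C`, and `S` is stable under all translations (multiplication by
`zᵐ`). Blocks occurring in `S̄` therefore occur in finitely supported codewords `x`, `y`, and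
`x + zᵐ y` contains both for `m` large: this is irreducibility. Summing the translates of a
nonzero finitely supported codeword by the multiples of a period `N` gives codewords converging
to a nonzero `N`-periodic sequence; its support is unbounded below, so it lies in `S̄ \ S`.
Linearity and shift-invariance pass to `S̄` by continuity, and `(𝔽ⁿ)^ℤ` is compact.
-/

open Function Set Filter Topology
open scoped translate

section Blocks

variable {A : Type}

def seqBlock (w : ℤ → A) (j : ℤ) (L : ℕ) : List A :=
  List.ofFn fun l : Fin L => w (j + l)

@[simp]
lemma length_seqBlock (w : ℤ → A) (j : ℤ) (L : ℕ) : (seqBlock w j L).length = L :=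
  List.length_ofFn

lemma blockOccursIn_iff {β : List A} {w : ℤ → A} :
    BlockOccursIn β w ↔ ∃ j, seqBlock w j β.length = β := by
  refine exists_congr fun j => ⟨fun h => ?_, fun h l => ?_⟩
  · exact List.ext_get (by simp) fun l _ hl => by simpa [seqBlock] using (h ⟨l, hl⟩).symm
  · simpa [seqBlock] using (List.getElem_of_eq h.symm l.isLt)

lemma seqBlock_add (w : ℤ → A) (j : ℤ) (L L' : ℕ) :
    seqBlock w j (L + L') = seqBlock w j L ++ seqBlock w (j + L) L' := by
  simp [seqBlock, List.ofFn_add, add_assoc]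

lemma seqBlock_congr {w w' : ℤ → A} {j : ℤ} {L : ℕ} (h : EqOn w w' (Ico j (j + L))) :
    seqBlock w j L = seqBlock w' j L := by
  simp only [seqBlock]
  congr 1
  funext l
  exact h ⟨by omega, by omega⟩

lemma seqBlock_translate (w : ℤ → A) (m j : ℤ) (L : ℕ) :
    seqBlock (τ m w) (j + m) L = seqBlock w j L := by
  simp only [seqBlock, translate_apply]
  congr 1
  funext l
  congr 1
  ring

lemma blockOccursIn_append_of_le {w : ℤ → A} {β γ : List A} {j j' : ℤ}
    (hβ : seqBlock w j β.length = β) (hγ : seqBlock w j' γ.length = γ)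
    (hle : j + β.length ≤ j') :
    BlockOccursIn (β ++ seqBlock w (j + β.length) (j' - (j + β.length)).toNat ++ γ) w := by
  refine blockOccursIn_iff.2 ⟨j, ?_⟩
  have hj' : j + β.length + (j' - (j + β.length)).toNat = j' := by omega
  simp only [List.length_append, length_seqBlock, seqBlock_add, hβ, Nat.cast_add, ← add_assoc]
  rw [hj', hγ]

end Blocks

section Topology

variable {A : Type} [TopologicalSpace A] [DiscreteTopology A]

theorem mem_closure_iff_forall_eqOn_Icc {X : Set (ℤ → A)} {w : ℤ → A} :
    w ∈ closure X ↔ ∀ a b : ℤ, ∃ x ∈ X, EqOn x w (Icc a b) := by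
  refine ⟨fun hw a b => ?_, fun h => ?_⟩
  · have hU : {x : ℤ → A | EqOn x w (Icc a b)} ∈ 𝓝 w :=
      (finite_Icc a b).eventually_all.2 fun t _ =>
        (continuous_apply (A := fun _ => A) t).continuousAt.eventually_mem
          (mem_nhds_discrete.2 (mem_singleton (w t)))
    obtain ⟨x, hxU, hxX⟩ := mem_closure_iff_nhds.1 hw _ hU
    exact ⟨x, hxX, hxU⟩
  · choose x hxX hxw using fun m : ℕ => h (-m) m
    refine mem_closure_of_tendsto (b := atTop) (tendsto_pi_nhds.2 fun t => ?_)
      (Eventually.of_forall hxX)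
    exact tendsto_const_nhds.congr' <|
      (eventually_ge_atTop t.natAbs).mono fun m hm => (hxw m ⟨by omega, by omega⟩).symm

theorem occursInSome_closure_iff {X : Set (ℤ → A)} {β : List A} :
    OccursInSome β (closure X) ↔ OccursInSome β X := by
  refine ⟨fun ⟨w, hw, hβ⟩ => ?_, fun ⟨x, hx, hβ⟩ => ⟨x, subset_closure hx, hβ⟩⟩
  obtain ⟨j, hj⟩ := blockOccursIn_iff.1 hβ
  obtain ⟨x, hxX, hxw⟩ := mem_closure_iff_forall_eqOn_Icc.1 hw j (j + β.length)
  refine ⟨x, hxX, blockOccursIn_iff.2 ⟨j, ?_⟩⟩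
  rw [seqBlock_congr (hxw.mono Ico_subset_Icc_self), hj]

end Topology

lemma shiftZ_eq_translate {A : Type} (w : ℤ → A) : shiftZ w = τ (-1) w := by
  funext t
  simp [shiftZ]

theorem ShiftInvariant.closure {A : Type} [TopologicalSpace A] {X : Set (ℤ → A)}
    (hX : ShiftInvariant X) : ShiftInvariant (closure X) := fun _ hw =>
  map_mem_closure (continuous_pi fun t => continuous_apply (t + 1)) hw hX

section Periodization

variable {A : Type}

theorem not_bddBelow_support_periodization [Zero A] {y : ℤ → A} {N : ℤ} (hN : 0 < N) (hy0 : y ≠ 0)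
    (hy : support y ⊆ Ico 0 N) : ¬ BddBelow (support fun t => y (t % N)) := by
  obtain ⟨t₀, ht₀⟩ := support_nonempty_iff.2 hy0
  rintro ⟨L, hL⟩
  have hL' (m : ℤ) : L ≤ t₀ - N * m := hL <| by
    rwa [mem_support, Int.sub_mul_emod_self_left, Int.emod_eq_of_lt (hy ht₀).1 (hy ht₀).2]
  nlinarith [hL' 0, hL' (t₀ - L + 1)]

theorem sum_translate_apply_of_support_subset_Ico [AddCommMonoid A] {y : ℤ → A} {N : ℤ} (hN : 0 < N)
    (hy : support y ⊆ Ico 0 N) {e₁ e₂ t : ℤ} (ht : t / N ∈ Icc e₁ e₂) :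
    (∑ e ∈ Finset.Icc e₁ e₂, τ (e * N) y) t = y (t % N) := by
  rw [Finset.sum_apply, Finset.sum_eq_single_of_mem (t / N) (Finset.mem_Icc.2 ht)]
  · rw [translate_apply, Int.emod_def, mul_comm]
  · intro e _ he
    refine notMem_support.1 fun h => he ?_
    have h' : t - e * N ∈ support y := h
    exact ((Int.ediv_emod_unique hN).2 ⟨by ring, hy h'⟩).1.symm

end Periodization

section FiniteSupportDense

variable {A : Type} [AddCommMonoid A] [TopologicalSpace A] [DiscreteTopology A]
  {V : AddSubmonoid (ℤ → A)}

theorem irreducibleShift_closure_of_subset_closure_finite_support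
    (htrans : ∀ x ∈ V, ∀ m : ℤ, τ m x ∈ V)
    (hdense : (V : Set (ℤ → A)) ⊆ closure {x ∈ V | (support x).Finite}) :
    IrreducibleShift (closure (V : Set (ℤ → A))) := by
  have hV := closure_minimal hdense isClosed_closure
  rintro β γ ⟨w, hw, hβw⟩ ⟨w', hw', hγw'⟩
  obtain ⟨x, ⟨hxV, hxfin⟩, hβx⟩ := occursInSome_closure_iff.1 ⟨w, hV hw, hβw⟩
  obtain ⟨y, ⟨hyV, hyfin⟩, hγy⟩ := occursInSome_closure_iff.1 ⟨w', hV hw', hγw'⟩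
  obtain ⟨j, hj⟩ := blockOccursIn_iff.1 hβx
  obtain ⟨j', hj'⟩ := blockOccursIn_iff.1 hγy
  obtain ⟨bx, hbx⟩ := hxfin.bddAbove
  obtain ⟨ay, hay⟩ := hyfin.bddBelow
  -- translate `y` far enough to the right that it neither overlaps `β` nor sits under `x`
  set m := max (max (j + β.length - ay) (bx + 1 - j')) (j + β.length - j')
  have hβ : seqBlock (x + τ m y) j β.length = β := by
    refine (seqBlock_congr fun t ht => ?_).trans hj
    have : y (t - m) = 0 := notMem_support.1 fun h => by have := hay h; grind
    simp [this]
  have hγ : seqBlock (x + τ m y) (j' + m) γ.length = γ := by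
    refine (seqBlock_congr fun t ht => ?_).trans ((seqBlock_translate y m j' _).trans hj')
    have : x t = 0 := notMem_support.1 fun h => by have := hbx h; grind
    simp [this]
  exact ⟨_, _, subset_closure (V.add_mem hxV (htrans y hyV m)),
    blockOccursIn_append_of_le hβ hγ (by omega)⟩

theorem periodization_mem_closure (htrans : ∀ x ∈ V, ∀ m : ℤ, τ m x ∈ V) {y : ℤ → A}
    (hyV : y ∈ V) {N : ℤ} (hN : 0 < N) (hy : support y ⊆ Ico 0 N) :
    (fun t => y (t % N)) ∈ closure (V : Set (ℤ → A)) :=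
  mem_closure_iff_forall_eqOn_Icc.2 fun a b =>
    ⟨∑ e ∈ Finset.Icc (a / N) (b / N), τ (e * N) y, V.sum_mem fun e _ => htrans y hyV (e * N),
      fun _ ht => sum_translate_apply_of_support_subset_Ico hN hy
        ⟨Int.ediv_le_ediv hN ht.1, Int.ediv_le_ediv hN ht.2⟩⟩

theorem exists_ne_zero_support_subset_Ico (hV : ∃ x ∈ V, x ≠ 0)
    (htrans : ∀ x ∈ V, ∀ m : ℤ, τ m x ∈ V)
    (hdense : (V : Set (ℤ → A)) ⊆ closure {x ∈ V | (support x).Finite}) :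
    ∃ y ∈ V, y ≠ 0 ∧ ∃ N : ℤ, 0 < N ∧ support y ⊆ Ico 0 N := by
  obtain ⟨x, ⟨hxV, hxfin⟩, hx0⟩ : ∃ x ∈ {x ∈ V | (support x).Finite}, x ≠ 0 := by
    by_contra! h
    obtain ⟨x, hx, hx0⟩ := hV
    have := closure_mono (t := {0}) h (hdense hx)
    rw [closure_singleton] at this
    exact hx0 this
  obtain ⟨a, ha⟩ := hxfin.bddBelow
  obtain ⟨b, hb⟩ := hxfin.bddAbove
  obtain ⟨t₀, ht₀⟩ := support_nonempty_iff.2 hx0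
  refine ⟨τ (-a) x, htrans x hxV _, fun h => hx0 ?_, b - a + 1, ?_, fun t ht => ?_⟩
  · simpa [translate_translate] using congrArg (τ a) h
  · linarith [ha ht₀, hb ht₀]
  · exact ⟨by linarith [ha ht], by linarith [hb ht]⟩

theorem not_isClosed_of_subset_closure_finite_support (hV : ∃ x ∈ V, x ≠ 0)
    (htrans : ∀ x ∈ V, ∀ m : ℤ, τ m x ∈ V)
    (hdense : (V : Set (ℤ → A)) ⊆ closure {x ∈ V | (support x).Finite})
    (hbdd : ∀ x ∈ V, BddBelow (support x)) :
    ¬ IsClosed (V : Set (ℤ → A)) := fun hclosed => by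
  obtain ⟨y, hyV, hy0, N, hN, hy⟩ := exists_ne_zero_support_subset_Ico hV htrans hdense
  have := hclosed.closure_eq ▸ periodization_mem_closure htrans hyV hN hy
  exact not_bddBelow_support_periodization hN hy0 hy (hbdd _ this)

end FiniteSupportDense

section LaurentSeries

open HahnSeries Polynomial

variable {R : Type*}

theorem HahnSeries.support_sum_subset [AddCommMonoid R] {Γ ι : Type*} [PartialOrder Γ]
    (s : Finset ι) (f : ι → HahnSeries Γ R) :
    (∑ j ∈ s, f j).support ⊆ ⋃ j ∈ s, (f j).support :=
  fun t ht => Finset.support_sum s (fun j => (f j).coeff) (by simpa [coeff_sum] using ht)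

theorem HahnSeries.finite_support_truncLT [Zero R] (h : LaurentSeries R) (c : ℤ) :
    (truncLT c h).support.Finite :=
  (finite_Ico h.order c).subset fun _ hi => by
    rw [support_truncLT] at hi
    exact ⟨order_le_of_coeff_ne_zero hi.1, hi.2⟩

theorem HahnSeries.coeff_truncLT_mul_of_lt [Ring R] {s : LaurentSeries R} (hs : s.support ⊆ Ici 0)
    (h : LaurentSeries R) {c t : ℤ} (ht : t < c) : (truncLT c h * s).coeff t = (h * s).coeff t := by
  have htail : (h - truncLT c h).support ⊆ Ici c := fun i hi => by
    by_contra hic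
    rw [mem_Ici, not_le] at hic
    exact hi (by simp [coeff_truncLT_of_lt hic])
  have : ((h - truncLT c h) * s).coeff t = 0 := by
    by_contra hne
    have := Ici_add_Ici_subset c 0 (add_subset_add htail hs (support_mul_subset hne))
    simp only [add_zero, mem_Ici] at this
    omega
  rwa [sub_mul, coeff_sub, sub_eq_zero, eq_comm] at this

theorem Polynomial.support_algebraMap_laurentSeries_subset [CommSemiring R] (p : R[X]) :
    (algebraMap R[X] (LaurentSeries R) p).support ⊆ Nat.cast '' (p.support : Set ℕ) :=
    fun i hi => by
  rw [HahnSeries.mem_support, algebraMap_hahnSeries_apply] at hi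
  change ((p : PowerSeries R) : LaurentSeries R).coeff i ≠ 0 at hi
  rw [PowerSeries.coeff_coe] at hi
  split_ifs at hi with hi0
  · exact absurd rfl hi
  · exact ⟨i.natAbs, by simpa using hi, Int.natAbs_of_nonneg (not_lt.1 hi0)⟩

end LaurentSeries

section Codes

open HahnSeries Polynomial Submodule

variable {𝔽 : Type} [Field 𝔽] {n : ℕ}

lemma support_lsToSeq (u : Fin n → LaurentSeries 𝔽) :
    support (lsToSeq u) = ⋃ i, (u i).support := by
  ext t
  simp [lsToSeq, Function.ne_iff]

lemma lsToSeq_injective : Injective (lsToSeq : (Fin n → LaurentSeries 𝔽) → ℤ → Fin n → 𝔽) :=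
  fun _ _ h => funext fun i => HahnSeries.ext <| funext fun t => congrFun (congrFun h t) i

lemma lsToSeq_single_smul (m : ℤ) (u : Fin n → LaurentSeries 𝔽) :
    lsToSeq (single m (1 : 𝔽) • u) = τ m (lsToSeq u) := by
  funext t i
  simp [lsToSeq, coeff_single_mul]

lemma bddBelow_support_lsToSeq (u : Fin n → LaurentSeries 𝔽) : BddBelow (support (lsToSeq u)) := by
  rw [support_lsToSeq, ← biUnion_univ]
  exact finite_univ.bddBelow_biUnion.2 fun i _ =>
    ⟨(u i).order, fun _ ht => order_le_of_coeff_ne_zero ht⟩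

def codeSeqs (C : Submodule (LaurentSeries 𝔽) (Fin n → LaurentSeries 𝔽)) :
    Submodule 𝔽 (ℤ → Fin n → 𝔽) where
  carrier := lsToSeq '' C
  add_mem' := by
    rintro _ _ ⟨u, hu, rfl⟩ ⟨v, hv, rfl⟩
    exact ⟨u + v, C.add_mem hu hv, rfl⟩
  zero_mem' := ⟨0, C.zero_mem, rfl⟩
  smul_mem' c := by
    rintro _ ⟨u, hu, rfl⟩
    refine ⟨HahnSeries.C c • u, C.smul_mem _ hu, ?_⟩
    funext t i
    simp [lsToSeq]

variable {C : Submodule (LaurentSeries 𝔽) (Fin n → LaurentSeries 𝔽)}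

lemma coe_codeSeqs : (codeSeqs C : Set (ℤ → Fin n → 𝔽)) = lsToSeq '' C := rfl

lemma translate_mem_codeSeqs {x : ℤ → Fin n → 𝔽} (hx : x ∈ codeSeqs C) (m : ℤ) :
    τ m x ∈ codeSeqs C := by
  obtain ⟨u, hu, rfl⟩ := hx
  exact ⟨_, C.smul_mem _ hu, lsToSeq_single_smul m u⟩

lemma exists_mem_codeSeqs_ne_zero (hC : C ≠ ⊥) : ∃ x ∈ codeSeqs C, x ≠ 0 := by
  obtain ⟨u, hu, hu0⟩ := exists_mem_ne_zero_of_ne_bot hC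
  exact ⟨lsToSeq u, ⟨u, hu, rfl⟩, fun h => hu0 (lsToSeq_injective (h.trans rfl))⟩

theorem codeSeqs_subset_closure_finite_support [TopologicalSpace 𝔽] [DiscreteTopology 𝔽]
    {ι : Type*} [Fintype ι] {p : ι → Fin n → 𝔽[X]}
    (hC : C = span (LaurentSeries 𝔽) (range fun j i => algebraMap 𝔽[X] (LaurentSeries 𝔽) (p j i))) :
    (codeSeqs C : Set (ℤ → Fin n → 𝔽)) ⊆ closure {x ∈ codeSeqs C | (support x).Finite} := by
  subst hC
  rintro _ ⟨u, hu, rfl⟩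
  obtain ⟨c, rfl⟩ := (mem_span_range_iff_exists_fun _).1 hu
  set P : ι → Fin n → LaurentSeries 𝔽 := fun j i => algebraMap 𝔽[X] (LaurentSeries 𝔽) (p j i)
  have hP (j : ι) (i : Fin n) := support_algebraMap_laurentSeries_subset (p j i)
  refine mem_closure_iff_forall_eqOn_Icc.2 fun _ b =>
    ⟨lsToSeq (∑ j, truncLT (b + 1) (c j) • P j),
      ⟨⟨_, sum_mem fun j _ => smul_mem _ _ (subset_span ⟨j, rfl⟩), rfl⟩, ?_⟩, fun t ht => ?_⟩
  · rw [support_lsToSeq]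
    refine finite_iUnion fun i => ?_
    simp only [Finset.sum_apply, Pi.smul_apply, smul_eq_mul]
    refine (Finset.univ.finite_toSet.biUnion fun j _ => ?_).subset (support_sum_subset _ _)
    exact ((finite_support_truncLT _ _).add
      ((p j i).support.finite_toSet.image _ |>.subset (hP j i))).subset support_mul_subset
  · funext i
    simp only [lsToSeq, Finset.sum_apply, Pi.smul_apply, smul_eq_mul, HahnSeries.coeff_sum]
    refine Finset.sum_congr rfl fun j _ => coeff_truncLT_mul_of_lt ?_ _ (Int.lt_add_one_iff.2 ht.2)
    intro k hk
    obtain ⟨m, -, rfl⟩ := hP j i hk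
    exact Int.natCast_nonneg m

theorem exists_span_polynomial_eq_span_ratFunc {ι : Type*} [Finite ι]
    (v : ι → Fin n → RatFunc 𝔽) :
    ∃ p : ι → Fin n → 𝔽[X],
      span (LaurentSeries 𝔽) (range fun j i => algebraMap 𝔽[X] (LaurentSeries 𝔽) (p j i)) =
        span (LaurentSeries 𝔽)
          (range fun j i => algebraMap (RatFunc 𝔽) (LaurentSeries 𝔽) (v j i)) := by
  obtain ⟨⟨b, hb⟩, hbv⟩ := IsLocalization.exist_integer_multiples_of_finite
    (nonZeroDivisors 𝔽[X]) fun ji : ι × Fin n => v ji.1 ji.2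
  choose p hp using hbv
  have hbunit : IsUnit (algebraMap 𝔽[X] (LaurentSeries 𝔽) b) :=
    ((map_ne_zero_iff _ (algebraMap_hahnSeries_injective ℤ)).2 (nonZeroDivisors.ne_zero hb)).isUnit
  refine ⟨fun j i => p (j, i), ?_⟩
  conv_rhs => rw [← span_smul_eq_of_isUnit _ _ hbunit, smul_set_range]
  congr! with j i
  rw [IsScalarTower.algebraMap_apply 𝔽[X] (RatFunc 𝔽), hp, Algebra.smul_def, map_mul,
    ← IsScalarTower.algebraMap_apply]
  rfl

end Codes

theorem isFLinearSet_coe {𝔽 M : Type} [Field 𝔽] [AddCommGroup M] [Module 𝔽 M] (S : Submodule 𝔽 M) :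
    IsFLinearSet 𝔽 (S : Set M) :=
  ⟨S.zero_mem, fun _ hx _ hy => S.add_mem hx hy, fun c _ hx => S.smul_mem c hx⟩

/-- A nonzero `𝔽((z))`-subspace `C ⊆ 𝔽((z))^n` with a basis of rational vectors,
viewed inside `(𝔽^n)^ℤ`, is not closed, but its closure is `𝔽`-linear, compact, irreducible
and shift-invariant. -/
theorem rational_code_not_closed_closure_is_code
    (𝔽 : Type) [Field 𝔽] [Fintype 𝔽] [TopologicalSpace 𝔽] [DiscreteTopology 𝔽]
    (n : ℕ) (C : Submodule (LaurentSeries 𝔽) (Fin n → LaurentSeries 𝔽))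
    (hne : C ≠ ⊥)
    (hbasis : ∃ (k : ℕ) (v : Fin k → Fin n → RatFunc 𝔽),
      LinearIndependent (LaurentSeries 𝔽)
        (fun j i => algebraMap (RatFunc 𝔽) (LaurentSeries 𝔽) (v j i)) ∧
      Submodule.span (LaurentSeries 𝔽)
        (Set.range fun j i => algebraMap (RatFunc 𝔽) (LaurentSeries 𝔽) (v j i)) = C) :
    ¬ IsClosed (lsToSeq '' (C : Set (Fin n → LaurentSeries 𝔽))) ∧
    IsFLinearSet 𝔽 (closure (lsToSeq '' (C : Set (Fin n → LaurentSeries 𝔽)))) ∧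
    IsCompact (closure (lsToSeq '' (C : Set (Fin n → LaurentSeries 𝔽)))) ∧
    IrreducibleShift (closure (lsToSeq '' (C : Set (Fin n → LaurentSeries 𝔽)))) ∧
    ShiftInvariant (closure (lsToSeq '' (C : Set (Fin n → LaurentSeries 𝔽)))) := by
  obtain ⟨k, v, -, hv⟩ := hbasis
  obtain ⟨p, hp⟩ := exists_span_polynomial_eq_span_ratFunc v
  have hdense := codeSeqs_subset_closure_finite_support (hp.trans hv).symm
  have htrans (x) (hx : x ∈ codeSeqs C) (m : ℤ) := translate_mem_codeSeqs hx m
  rw [← coe_codeSeqs]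
  refine ⟨?_, ?_, isClosed_closure.isCompact, ?_, ?_⟩
  · exact not_isClosed_of_subset_closure_finite_support
      (V := (codeSeqs C).toAddSubmonoid)
      (exists_mem_codeSeqs_ne_zero hne) htrans hdense
      fun _ ⟨u, _, hu⟩ => hu ▸ bddBelow_support_lsToSeq u
  · rw [← Submodule.topologicalClosure_coe]
    exact isFLinearSet_coe _
  · exact irreducibleShift_closure_of_subset_closure_finite_support
      (V := (codeSeqs C).toAddSubmonoid) htrans hdense
  · refine ShiftInvariant.closure fun x hx => ?_
    rw [shiftZ_eq_translate]
    exact htrans x hx (-1)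
end

section
/- Let G(z) be an n×k matrix over the Laurent polynomial ring 𝔽[z,z^{-1}] of rank k, and let C = { G(z)m(z) : m(z) ∈ 𝔽^k[z,z^{-1}] } ⊆ 𝔽^n[z,z^{-1}]. The following are equivalent: (i) C is observable; (ii) G(z) is right prime over 𝔽[z,z^{-1}]; (iii) C has a kernel representation, i.e. there exist r ≥ 0 and an r×n matrix H(z) over 𝔽[z,z^{-1}] such that C = { v(z) ∈ 𝔽^n[z,z^{-1}] : H(z)v(z) = 0 }. -/
open Matrix

section ConvolutionalDefs

variable {𝔽 : Type} [Field 𝔽]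

/-- A subset of a module is `𝔽`-linear. -/
def IsLinearSetF (𝔽 : Type) [Field 𝔽] {M : Type} [AddCommGroup M] [Module 𝔽 M]
    (C : Set M) : Prop :=
  (0 : M) ∈ C ∧ (∀ x ∈ C, ∀ y ∈ C, x + y ∈ C) ∧ ∀ (c : 𝔽), ∀ x ∈ C, c • x ∈ C

end ConvolutionalDefs

/-- A set of finite-support (Laurent polynomial) vectors is observable if for some `N`,
whenever the supports of `v` and `v'` are separated by a distance of at least `N` and
`v + v' ∈ C`, then `v ∈ C` and `v' ∈ C`. -/
def ObservableCode {𝔽 : Type} [Field 𝔽] {n : ℕ}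
    (C : Set (Fin n → LaurentPolynomial 𝔽)) : Prop :=
  ∃ N : ℕ, ∀ v v' : Fin n → LaurentPolynomial 𝔽,
    (∀ s t : ℤ, (∃ a, (v a).coeff s ≠ 0) → (∃ a, (v' a).coeff t ≠ 0) → (N : ℤ) ≤ |t - s|) →
    v + v' ∈ C → v ∈ C ∧ v' ∈ C

/-!
(ii) ⇒ (iii): if `L G = 1` then `C` is the kernel of `1 - G L`.
(iii) ⇒ (i): the entries of `H` have bounded support, so `H v` lives near the support of `v`;
when `v` and `v'` are far apart, `H v` and `H v'` cannot cancel.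
(i) ⇒ (ii): `𝔽[z,z⁻¹]` is a PID, so once `𝔽^n[z,z⁻¹] ⧸ C` is torsion-free it is free, the
inclusion of `C ≅ 𝔽^k[z,z⁻¹]` splits, and `G` has a left inverse. If `q u ∈ C` with `q ≠ 0`, then
since `𝔽` is finite `q` divides `z^M - 1` for arbitrarily large `M`, so `z^M u + (-u) ∈ C` is a
sum of two vectors with far-apart supports, and observability gives `u ∈ C`.
-/

open LaurentPolynomial

theorem IsLocalization.isPrincipalIdealRing {R : Type*} [CommRing R] [IsPrincipalIdealRing R]
    (M : Submonoid R) (S : Type*) [CommRing S] [Algebra R S] [IsLocalization M S] :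
    IsPrincipalIdealRing S := by
  refine ⟨fun I => ?_⟩
  obtain ⟨a, ha⟩ := (IsPrincipalIdealRing.principal (I.under R)).1
  refine ⟨algebraMap R S a, ?_⟩
  rw [← IsLocalization.map_under M S I, ha, Ideal.submodule_span_eq, Ideal.map_span,
    Set.image_singleton, Ideal.submodule_span_eq]

instance (𝔽 : Type*) [Field 𝔽] : IsPrincipalIdealRing 𝔽[T;T⁻¹] :=
  IsLocalization.isPrincipalIdealRing (Submonoid.powers (Polynomial.X : Polynomial 𝔽)) _

theorem LaurentPolynomial.exists_dvd_T_sub_one {𝔽 : Type*} [Field 𝔽] [Finite 𝔽]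
    {q : 𝔽[T;T⁻¹]} (hq : q ≠ 0) : ∃ m : ℕ, 0 < m ∧ q ∣ T m - 1 := by
  obtain ⟨d, p, hp⟩ := q.exists_T_pow
  have hp0 : p ≠ 0 := by
    rintro rfl
    rw [map_zero, eq_comm, mul_eq_zero] at hp
    exact hp.elim hq (isUnit_T _).ne_zero
  have : Module.Finite 𝔽 (AdjoinRoot p) := (AdjoinRoot.powerBasis hp0).finite
  have : Finite (AdjoinRoot p) := Module.finite_of_finite 𝔽
  -- In the finite ring `𝔽[X]/(p)` two powers of `X` agree, so `p ∣ X^i (X^(j-i) - 1)`.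
  have of_pow_eq : ∀ i j : ℕ, i < j → AdjoinRoot.root p ^ j = AdjoinRoot.root p ^ i →
      ∃ m : ℕ, 0 < m ∧ q ∣ T m - 1 := by
    intro i j hij h
    rw [← AdjoinRoot.mk_X, ← map_pow, ← map_pow, AdjoinRoot.mk_eq_mk] at h
    have hdvd : q ∣ T i * (T (j - i : ℕ) - 1) :=
      calc q ∣ Polynomial.toLaurent p := by rw [hp]; exact dvd_mul_right _ _
        _ ∣ Polynomial.toLaurent (Polynomial.X ^ j - Polynomial.X ^ i) := map_dvd _ h
        _ = T i * (T (j - i : ℕ) - 1) := by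
          rw [map_sub, Polynomial.toLaurent_X_pow, Polynomial.toLaurent_X_pow, mul_sub, mul_one,
            ← T_add]
          congr 2
          omega
    exact ⟨j - i, by omega, (isUnit_T _).dvd_mul_left.1 hdvd⟩
  obtain ⟨i, j, hne, h⟩ := Finite.exists_ne_map_eq_of_infinite fun i : ℕ => AdjoinRoot.root p ^ i
  rcases hne.lt_or_gt with hlt | hlt
  · exact of_pow_eq i j hlt h.symm
  · exact of_pow_eq j i hlt h

theorem LaurentPolynomial.exists_coeff_ne_zero_of_coeff_mul_ne_zero {R : Type*} [Semiring R]
    {f g : R[T;T⁻¹]} {t : ℤ} (h : (f * g).coeff t ≠ 0) :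
    ∃ x y, x + y = t ∧ f.coeff x ≠ 0 ∧ g.coeff y ≠ 0 := by
  classical
  obtain ⟨x, hx, y, hy, rfl⟩ :=
    Finset.mem_add.1 (AddMonoidAlgebra.support_coeff_mul_subset f g (Finsupp.mem_support_iff.2 h))
  exact ⟨x, y, rfl, Finsupp.mem_support_iff.1 hx, Finsupp.mem_support_iff.1 hy⟩

theorem LaurentPolynomial.exists_natAbs_le_of_coeff_ne_zero {R : Type*} [Semiring R] {ι : Type*}
    [Fintype ι] (f : ι → R[T;T⁻¹]) : ∃ B : ℕ, ∀ i s, (f i).coeff s ≠ 0 → s.natAbs ≤ B :=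
  ⟨Finset.univ.sup fun i => (f i).coeff.support.sup Int.natAbs, fun i _ hs =>
    (Finset.le_sup (Finsupp.mem_support_iff.2 hs)).trans
      (Finset.le_sup (f := fun i => (f i).coeff.support.sup Int.natAbs) (Finset.mem_univ i))⟩

theorem Matrix.exists_coeff_ne_zero_of_coeff_mulVec_ne_zero {R : Type*} [Semiring R]
    {ι κ : Type*} [Fintype κ] {H : Matrix ι κ R[T;T⁻¹]} {D : ℕ}
    (hD : ∀ i j x, (H i j).coeff x ≠ 0 → x.natAbs ≤ D) {w : κ → R[T;T⁻¹]} {i : ι} {t : ℤ}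
    (h : ((H *ᵥ w) i).coeff t ≠ 0) : ∃ j s, (t - s).natAbs ≤ D ∧ (w j).coeff s ≠ 0 := by
  rw [mulVec, dotProduct, AddMonoidAlgebra.coeff_sum, Finsupp.finsetSum_apply] at h
  obtain ⟨j, -, hj⟩ := Finset.exists_ne_zero_of_sum_ne_zero h
  obtain ⟨x, s, rfl, hx, hs⟩ := exists_coeff_ne_zero_of_coeff_mul_ne_zero hj
  exact ⟨j, s, by simpa using hD i j x hx, hs⟩

theorem observableCode_setOf_mulVec_eq_zero {𝔽 : Type} [Field 𝔽] {r n : ℕ}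
    (H : Matrix (Fin r) (Fin n) 𝔽[T;T⁻¹]) : ObservableCode {v | H *ᵥ v = 0} := by
  obtain ⟨D, hD⟩ := exists_natAbs_le_of_coeff_ne_zero fun p : Fin r × Fin n => H p.1 p.2
  refine ⟨2 * D + 1, fun v v' hsep hsum => ?_⟩
  simp only [Set.mem_ofPred_eq, mulVec_add] at hsum ⊢
  have hv : H *ᵥ v = 0 := by
    by_contra hne
    obtain ⟨i, t, ht⟩ : ∃ i t, ((H *ᵥ v) i).coeff t ≠ 0 := by
      by_contra! h
      exact hne (funext fun i => LaurentPolynomial.ext (h i))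
    have ht' : ((H *ᵥ v') i).coeff t ≠ 0 := by
      rwa [eq_neg_of_add_eq_zero_right hsum, Pi.neg_apply, AddMonoidAlgebra.coeff_neg,
        Finsupp.neg_apply, neg_ne_zero]
    obtain ⟨b, s, hs, hbs⟩ := exists_coeff_ne_zero_of_coeff_mulVec_ne_zero (fun i j => hD (i, j)) ht
    obtain ⟨b', s', hs', hbs'⟩ :=
      exists_coeff_ne_zero_of_coeff_mulVec_ne_zero (fun i j => hD (i, j)) ht'
    have := hsep s s' ⟨b, hbs⟩ ⟨b', hbs'⟩
    rw [Int.abs_eq_natAbs] at this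
    omega
  exact ⟨hv, by rwa [hv, zero_add] at hsum⟩

theorem ObservableCode.mem_of_smul_mem {𝔽 : Type} [Field 𝔽] [Finite 𝔽] {n : ℕ}
    {S : Submodule 𝔽[T;T⁻¹] (Fin n → 𝔽[T;T⁻¹])} (hS : ObservableCode (S : Set (Fin n → 𝔽[T;T⁻¹])))
    {q : 𝔽[T;T⁻¹]} (hq : q ≠ 0) {u : Fin n → 𝔽[T;T⁻¹]} (hu : q • u ∈ S) : u ∈ S := by
  obtain ⟨N, hN⟩ := hS
  obtain ⟨m, hm, hqm⟩ := exists_dvd_T_sub_one hq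
  obtain ⟨B, hB⟩ := exists_natAbs_le_of_coeff_ne_zero u
  set M := m * (N + 2 * B + 1)
  have hMge : N + 2 * B + 1 ≤ M := Nat.le_mul_of_pos_left _ hm
  obtain ⟨c, hc⟩ : q ∣ T M - 1 := by
    refine hqm.trans ?_
    rw [show (M : ℤ) = (N + 2 * B + 1 : ℕ) * m by push_cast [M]; ring, ← T_pow]
    exact sub_one_dvd_pow_sub_one _ _
  have hsum : (T M : 𝔽[T;T⁻¹]) • u + -u ∈ S := by
    convert S.smul_mem c hu using 1
    rw [smul_smul, mul_comm, ← hc, sub_smul, one_smul, sub_eq_add_neg]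
  have hsep : ∀ s t : ℤ, (∃ a, (((T M : 𝔽[T;T⁻¹]) • u) a).coeff s ≠ 0) →
      (∃ a, ((-u) a).coeff t ≠ 0) → (N : ℤ) ≤ |t - s| := by
    rintro s t ⟨a, has⟩ ⟨a', hat⟩
    obtain ⟨x, y, rfl, hx, hy⟩ := exists_coeff_ne_zero_of_coeff_mul_ne_zero has
    have hxM : x = M := by
      by_contra hne
      exact hx (by rw [T_apply, if_neg (Ne.symm hne)])
    have hyB := hB a y hy
    have htB : t.natAbs ≤ B := hB a' t (by simpa using hat)
    rw [Int.abs_eq_natAbs]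
    omega
  exact neg_mem_iff.1 (hN _ _ hsep hsum).2

theorem Submodule.isTorsionFree_quotient_of_smul_mem {R M : Type*} [Ring R] [Nontrivial R]
    [AddCommGroup M] [Module R M] {S : Submodule R M}
    (h : ∀ q : R, q ≠ 0 → ∀ u : M, q • u ∈ S → u ∈ S) : Module.IsTorsionFree R (M ⧸ S) := by
  refine .of_smul_eq_zero fun q x hqx => or_iff_not_imp_left.2 fun hq => ?_
  induction x using Submodule.Quotient.induction_on with
  | H u =>
    rw [← Submodule.Quotient.mk_smul, Submodule.Quotient.mk_eq_zero] at hqx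
    exact (Submodule.Quotient.mk_eq_zero S).2 (h q hq u hqx)

theorem LinearMap.exists_leftInverse_of_injective_of_isTorsionFree {R M N : Type*} [CommRing R]
    [IsDomain R] [IsPrincipalIdealRing R] [AddCommGroup M] [Module R M] [AddCommGroup N]
    [Module R N] [Module.Finite R N] (f : M →ₗ[R] N) (hf : Function.Injective f)
    [Module.IsTorsionFree R (N ⧸ LinearMap.range f)] :
    ∃ g : N →ₗ[R] M, g ∘ₗ f = LinearMap.id :=
  ((Function.Exact.split_tfae f.exact_map_mkQ_range hf (Submodule.mkQ_surjective _)).out 0 1).1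
    (Module.projective_lifting_property _ _ (Submodule.mkQ_surjective _))

theorem rightPrime_of_observableCode {𝔽 : Type} [Field 𝔽] [Finite 𝔽] {n : ℕ} {l : Type}
    [Fintype l] [DecidableEq l] {G : Matrix (Fin n) l 𝔽[T;T⁻¹]} (hG : Function.Injective G.mulVec)
    (hobs : ObservableCode (Set.range G.mulVec)) : RightPrime G := by
  have : Module.IsTorsionFree 𝔽[T;T⁻¹] ((Fin n → 𝔽[T;T⁻¹]) ⧸ LinearMap.range G.mulVecLin) :=
    Submodule.isTorsionFree_quotient_of_smul_mem fun _ hq _ hu =>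
      ObservableCode.mem_of_smul_mem (S := LinearMap.range G.mulVecLin) hobs hq hu
  obtain ⟨L, hL⟩ := G.mulVecLin.exists_leftInverse_of_injective_of_isTorsionFree hG
  refine ⟨LinearMap.toMatrix' L, toLin'.injective ?_⟩
  rwa [toLin'_mul, toLin'_toMatrix', toLin'_one]

theorem range_mulVec_eq_setOf_mulVec_eq_zero {R : Type*} [CommRing R] {m l : Type*} [Fintype m]
    [DecidableEq m] [Fintype l] [DecidableEq l] {G : Matrix m l R} {L : Matrix l m R}
    (hL : L * G = 1) :
    Set.range G.mulVec = {v | (1 - G * L) *ᵥ v = 0} := by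
  ext v
  simp only [Set.mem_range, Set.mem_ofPred_eq, sub_mulVec, one_mulVec, sub_eq_zero]
  constructor
  · rintro ⟨x, rfl⟩
    rw [mulVec_mulVec, Matrix.mul_assoc, hL, Matrix.mul_one]
  · intro hv
    exact ⟨L *ᵥ v, by rw [mulVec_mulVec, ← hv]⟩

/-- For a full column rank `n×k` Laurent polynomial matrix `G(z)` with column
module `C = {G(z)m(z)}`, observability of `C`, right primeness of `G(z)` and the existence of a
kernel (parity check) representation of `C` are equivalent. -/
theorem observable_iff_rightPrime_iff_kernel
    (𝔽 : Type) [Field 𝔽] [Fintype 𝔽]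
    (n k : ℕ) (G : Matrix (Fin n) (Fin k) (LaurentPolynomial 𝔽))
    (hG : LinearIndependent (LaurentPolynomial 𝔽) Gᵀ)
    (C : Set (Fin n → LaurentPolynomial 𝔽))
    (hC : C = Set.range G.mulVec) :
    List.TFAE
      [ ObservableCode C,
        RightPrime G,
        ∃ (r : ℕ) (H : Matrix (Fin r) (Fin n) (LaurentPolynomial 𝔽)),
          C = { v : Fin n → LaurentPolynomial 𝔽 | H.mulVec v = 0 } ] := by
  subst hC
  tfae_have 1 → 2 := rightPrime_of_observableCode (mulVec_injective_iff.2 hG)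
  tfae_have 2 → 3
  | ⟨L, hL⟩ => ⟨n, 1 - G * L, range_mulVec_eq_setOf_mulVec_eq_zero hL⟩
  tfae_have 3 → 1
  | ⟨_, H, hH⟩ => hH ▸ observableCode_setOf_mulVec_eq_zero H
  tfae_finish
end

section
/- Let P(z) be an r×n matrix over 𝔽[z] of rank r, let B = ker P(σ) ⊆ (𝔽^n)^{ℤ_+} be its kernel behavior on the positive time axis, let δ be the McMillan degree of B, and set k = n − r. Then there exist constant matrices G, F ∈ 𝔽^{δ×(δ+k)} and H ∈ 𝔽^{n×(δ+k)} such that B = { w ∈ (𝔽^n)^{ℤ_+} : there exists ζ ∈ (𝔽^{δ+k})^{ℤ_+} with Gζ_{t+1} = Fζ_t and w_t = Hζ_t for all t ≥ 0 }, and moreover: (i) G has full row rank; (ii) the (δ+n)×(δ+k) stacked matrix [G; H] has full column rank; (iii) the (δ+n)×(δ+k) polynomial matrix [zG − F; H] is right prime over 𝔽[z]. -/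
open Matrix

/-!
Replace `P` by the row-reduced `R = U P`, which has the same kernel because `U` is unimodular; let
`νᵢ` be its row degrees and `Λ` its leading row coefficient matrix, which has full row rank, and
complete `Λ` to an invertible matrix `[Λ; M]`. For `w ∈ B` take as state the tails
`x_{i,s} = ⌊z⁻ˢ Rᵢ⌋(σ) w` for `1 ≤ s ≤ νᵢ` together with `v = M w`. The tails satisfy
`x_{i,s}(t) = R_{i,s} w(t) + x_{i,s+1}(t + 1)`, with `x_{i,0} = (R(σ) w)ᵢ = 0` and
`x_{i,νᵢ} = Λᵢ w`: this is the first-order system, and `w` is recovered from `(Λ w, M w)`.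
Conversely, running the recursion downwards from `s = νᵢ` identifies the state of any solution
with the tails of its output, which forces `R(σ) w = 0`; run over `𝔽[z]`, the same recursion
expresses every coordinate of `ζ` through `(zG - F) ζ` and `H ζ`, giving right primeness.
-/

open Polynomial

section Shift

variable (𝔽 : Type*) [CommSemiring 𝔽]

def seqShift : Module.End 𝔽 (ℕ → 𝔽) where
  toFun w t := w (t + 1)
  map_add' _ _ := rfl
  map_smul' _ _ := rfl

variable {𝔽}

theorem seqShift_pow_apply (i : ℕ) (w : ℕ → 𝔽) (t : ℕ) : (seqShift 𝔽 ^ i) w t = w (t + i) := by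
  induction i generalizing w with
  | zero => rfl
  | succ i ih => rw [pow_succ, Module.End.mul_apply, ih]; rfl

theorem aeval_seqShift_apply (p : 𝔽[X]) (w : ℕ → 𝔽) (t : ℕ) :
    aeval (seqShift 𝔽) p w t = p.sum fun i c => c * w (t + i) := by
  induction p using Polynomial.induction_on' with
  | add p q hp hq =>
    rw [map_add, sum_add_index _ _ _ (fun _ => zero_mul _) (fun _ _ _ => add_mul _ _ _),
      LinearMap.add_apply, Pi.add_apply, hp, hq]
  | monomial i c =>
    rw [aeval_monomial, sum_monomial_index c (fun i c => c * w (t + i)) (zero_mul _),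
      Module.End.mul_apply, Module.algebraMap_end_apply, Pi.smul_apply, seqShift_pow_apply,
      smul_eq_mul]

theorem aeval_seqShift_apply_eq_add (p : 𝔽[X]) (w : ℕ → 𝔽) (t : ℕ) :
    aeval (seqShift 𝔽) p w t = p.coeff 0 * w t + aeval (seqShift 𝔽) (divX p) w (t + 1) := by
  conv_lhs => rw [← X_mul_divX_add p]
  rw [map_add, map_mul, aeval_X, aeval_C, LinearMap.add_apply, Module.End.mul_apply,
    Module.algebraMap_end_apply, Pi.add_apply, add_comm]
  rfl

end Shift

theorem coeff_iterate_divX {R : Type*} [Semiring R] (p : R[X]) (s n : ℕ) :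
    (divX^[s] p).coeff n = p.coeff (n + s) := by
  induction s generalizing n with
  | zero => rfl
  | succ s ih => rw [Function.iterate_succ_apply', coeff_divX, ih, add_right_comm]; rfl

theorem iterate_divX_eq_zero_of_natDegree_lt {R : Type*} [Semiring R] {p : R[X]} {s : ℕ}
    (h : p.natDegree < s) : divX^[s] p = 0 := by
  ext n
  rw [coeff_iterate_divX, coeff_zero, coeff_eq_zero_of_natDegree_lt (by omega)]

section KernelBehavior

variable {𝔽 : Type} [Field 𝔽] {m n k : ℕ}

theorem pSigmaPlus_apply (P : Matrix (Fin m) (Fin n) 𝔽[X]) (w : ℕ → Fin n → 𝔽) (t : ℕ)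
    (a : Fin m) : pSigmaPlus P w t a = ∑ b, aeval (seqShift 𝔽) (P a b) (fun s => w s b) t := by
  simp only [pSigmaPlus, aeval_seqShift_apply]

theorem pSigmaPlus_mul (U : Matrix (Fin k) (Fin m) 𝔽[X]) (P : Matrix (Fin m) (Fin n) 𝔽[X])
    (w : ℕ → Fin n → 𝔽) : pSigmaPlus (U * P) w = pSigmaPlus U (pSigmaPlus P w) := by
  funext t a
  have hsum (c : Fin m) : (fun s => pSigmaPlus P w s c)
      = ∑ b, aeval (seqShift 𝔽) (P c b) (fun s => w s b) := by
    funext s; rw [pSigmaPlus_apply, Finset.sum_apply]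
  rw [pSigmaPlus_apply, pSigmaPlus_apply]
  simp only [hsum, Matrix.mul_apply, map_sum, map_mul, LinearMap.coe_sum, Finset.sum_apply,
    Module.End.mul_apply]
  exact Finset.sum_comm

theorem pSigmaPlus_zero (P : Matrix (Fin m) (Fin n) 𝔽[X]) : pSigmaPlus P 0 = 0 := by
  funext t a
  simp [pSigmaPlus, Polynomial.sum_def]

theorem pSigmaPlus_mul_eq_zero_iff_of_isUnit {U : Matrix (Fin m) (Fin m) 𝔽[X]} (hU : IsUnit U)
    (P : Matrix (Fin m) (Fin n) 𝔽[X]) (w : ℕ → Fin n → 𝔽) :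
    pSigmaPlus (U * P) w = 0 ↔ pSigmaPlus P w = 0 := by
  obtain ⟨u, rfl⟩ := hU
  refine ⟨fun h => ?_, fun h => by rw [pSigmaPlus_mul, h, pSigmaPlus_zero]⟩
  rw [← Matrix.one_mul P, ← u.inv_mul, Matrix.mul_assoc, pSigmaPlus_mul, h, pSigmaPlus_zero]

end KernelBehavior

section Tails

variable {𝔽 : Type} [Field 𝔽] {r n : ℕ} (R : Matrix (Fin r) (Fin n) 𝔽[X])

def leadRowCoeff : Matrix (Fin r) (Fin n) 𝔽 := Matrix.of fun i j => (R i j).coeff (rowDeg R i)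

theorem natDegree_le_rowDeg (i : Fin r) (j : Fin n) : (R i j).natDegree ≤ rowDeg R i :=
  Finset.le_sup (f := fun j => (R i j).natDegree) (Finset.mem_univ j)

/-- The `i`-th entry of `⌊z⁻ˢ R(z)⌋(σ) w`, where `⌊·⌋` drops the negative powers of `z`. -/
noncomputable def tailSeq (w : ℕ → Fin n → 𝔽) (i : Fin r) (s t : ℕ) : 𝔽 :=
  ∑ j, aeval (seqShift 𝔽) (divX^[s] (R i j)) (fun u => w u j) t

variable (w : ℕ → Fin n → 𝔽) (i : Fin r)

theorem tailSeq_zero (t : ℕ) : tailSeq R w i 0 t = pSigmaPlus R w t i :=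
  (pSigmaPlus_apply R w t i).symm

theorem tailSeq_eq_add (s t : ℕ) :
    tailSeq R w i s t = ∑ j, (R i j).coeff s * w t j + tailSeq R w i (s + 1) (t + 1) := by
  simp only [tailSeq, aeval_seqShift_apply_eq_add (divX^[s] _), coeff_iterate_divX, zero_add,
    ← Function.iterate_succ_apply' divX, Finset.sum_add_distrib]

theorem tailSeq_eq_zero_of_rowDeg_lt {s : ℕ} (h : rowDeg R i < s) (t : ℕ) :
    tailSeq R w i s t = 0 := by
  simp only [tailSeq, iterate_divX_eq_zero_of_natDegree_lt ((natDegree_le_rowDeg R i _).trans_lt h),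
    map_zero, LinearMap.zero_apply, Pi.zero_apply, Finset.sum_const_zero]

theorem tailSeq_rowDeg (t : ℕ) : tailSeq R w i (rowDeg R i) t = (leadRowCoeff R *ᵥ w t) i := by
  rw [tailSeq_eq_add, tailSeq_eq_zero_of_rowDeg_lt R w i (Nat.lt_succ_self _), add_zero]
  rfl

end Tails

section Selection

variable {A A' m l : Type*} [Semiring A] [Semiring A'] [DecidableEq l]

def selMatrix (f : m → Option l) : Matrix m l A :=
  Matrix.of fun i => (f i).elim 0 fun j => Pi.single j 1

theorem selMatrix_row_of_eq_some {f : m → Option l} {i : m} {j : l} (h : f i = some j) :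
    (selMatrix f : Matrix m l A) i = Pi.single j 1 := by
  change (f i).elim 0 _ = _
  rw [h]
  rfl

theorem selMatrix_mulVec [Fintype l] (f : m → Option l) (v : l → A) :
    selMatrix f *ᵥ v = fun i => (f i).elim 0 v := by
  funext i
  simp only [Matrix.mulVec, selMatrix, Matrix.of_apply]
  cases f i <;> simp [single_dotProduct]

theorem selMatrix_map (f : m → Option l) (g : A →+* A') :
    (selMatrix f : Matrix m l A).map g = selMatrix f := by
  ext i j
  simp only [Matrix.map_apply, selMatrix, Matrix.of_apply]
  cases f i <;> simp [Pi.single_apply, apply_ite g]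

end Selection

theorem RightPrime.submatrix {R : Type} [CommRing R] {m l m' l' : Type} [Fintype m] [Fintype l]
    [Fintype m'] [Fintype l'] [DecidableEq l] [DecidableEq l'] {A : Matrix m l R}
    (h : RightPrime A) (e₁ : m' ≃ m) (e₂ : l' ≃ l) : RightPrime (A.submatrix e₁ e₂) := by
  obtain ⟨L, hL⟩ := h
  exact ⟨L.submatrix e₂ e₁, by rw [submatrix_mul_equiv, hL, submatrix_one_equiv]⟩

theorem rightPrime_of_single_mem_span {R : Type} [CommRing R] {m l : Type} [Fintype m]
    [Fintype l] [DecidableEq l] (A : Matrix m l R)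
    (h : ∀ c, Pi.single c 1 ∈ Submodule.span R (Set.range A)) : RightPrime A := by
  choose L hL using fun c => (Submodule.mem_span_range_iff_exists_fun R).1 (h c)
  refine ⟨Matrix.of L, Matrix.ext fun c d => ?_⟩
  simpa [Matrix.mul_apply, Matrix.one_apply, Pi.single_apply, eq_comm] using congrFun (hL c) d

theorem fromRows_submatrix {α ι ς o ι' ς' : Type*} (G : Matrix ι ς α) (H : Matrix o ς α)
    (e₁ : ι' → ι) (e₂ : ς' → ς) :
    fromRows (G.submatrix e₁ e₂) (H.submatrix id e₂)
      = (fromRows G H).submatrix (Sum.map e₁ id) e₂ := by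
  ext (_ | _) _ <;> rfl

section Pencil

variable {𝔽 : Type} [Field 𝔽] {ι ς o ι' ς' : Type}

noncomputable def pencil (G F : Matrix ι ς 𝔽) (H : Matrix o ς 𝔽) : Matrix (ι ⊕ o) ς 𝔽[X] :=
  fromRows ((X : 𝔽[X]) • G.map (fun a => (C a : 𝔽[X])) - F.map (fun a => (C a : 𝔽[X])))
    (H.map (fun a => (C a : 𝔽[X])))

theorem pencil_submatrix (G F : Matrix ι ς 𝔽) (H : Matrix o ς 𝔽) (e₁ : ι' ≃ ι) (e₂ : ς' ≃ ς) :
    pencil (G.submatrix e₁ e₂) (F.submatrix e₁ e₂) (H.submatrix id e₂)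
      = (pencil G F H).submatrix (Equiv.sumCongr e₁ (Equiv.refl o)) e₂ := by
  ext (_ | _) _ <;> rfl

theorem map_mul_row_mem_span_pencil {k : Type} [Fintype o] (G F : Matrix ι ς 𝔽)
    (H : Matrix o ς 𝔽) (Y : Matrix k o 𝔽) (j : k) :
    (Y * H).map (fun a => (C a : 𝔽[X])) j ∈ Submodule.span 𝔽[X] (Set.range (pencil G F H)) := by
  have : (Y * H).map (fun a => (C a : 𝔽[X])) j = ∑ b, C (Y j b) • pencil G F H (.inr b) := by
    ext c; simp [pencil, mul_apply, Finset.sum_apply]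
  rw [this]
  exact Submodule.sum_mem _ fun b _ => Submodule.smul_mem _ _ (Submodule.subset_span ⟨_, rfl⟩)

variable [Fintype ς] [Fintype ς']

def pencilBehavior (G F : Matrix ι ς 𝔽) (H : Matrix o ς 𝔽) : Set (ℕ → o → 𝔽) :=
  { w | ∃ ζ : ℕ → ς → 𝔽, ∀ t, G *ᵥ ζ (t + 1) = F *ᵥ ζ t ∧ w t = H *ᵥ ζ t }

structure IsMinimalPencilRep [Fintype ι] [Fintype o] [DecidableEq ς] (B : Set (ℕ → o → 𝔽))
    (G F : Matrix ι ς 𝔽) (H : Matrix o ς 𝔽) : Prop where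
  eq_pencilBehavior : B = pencilBehavior G F H
  rank_eq : G.rank = Fintype.card ι
  rank_fromRows_eq : (fromRows G H).rank = Fintype.card ς
  rightPrime : RightPrime (pencil G F H)

theorem pencilBehavior_submatrix (G F : Matrix ι ς 𝔽) (H : Matrix o ς 𝔽) (e₁ : ι' ≃ ι)
    (e₂ : ς' ≃ ς) :
    pencilBehavior (G.submatrix e₁ e₂) (F.submatrix e₁ e₂) (H.submatrix id e₂)
      = pencilBehavior G F H := by
  have mulVec_comp {κ κ₀ : Type} (M : Matrix κ ς 𝔽) (f : κ₀ → κ) (ζ : ς → 𝔽) :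
      M.submatrix f e₂ *ᵥ (ζ ∘ e₂) = (M *ᵥ ζ) ∘ f := by
    rw [submatrix_mulVec_equiv, Function.comp_assoc, e₂.self_comp_symm, Function.comp_id]
  ext w
  constructor
  · rintro ⟨ζ, hζ⟩
    refine ⟨fun t => ζ t ∘ e₂.symm, fun t => ?_⟩
    simpa [submatrix_mulVec_equiv, e₁.surjective.injective_comp_right.eq_iff] using hζ t
  · rintro ⟨ζ, hζ⟩
    refine ⟨fun t => ζ t ∘ e₂, fun t => ?_⟩
    simp only [mulVec_comp, (hζ t).1, (hζ t).2, Function.comp_id, and_true]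

theorem IsMinimalPencilRep.submatrix [Fintype ι] [Fintype ι'] [Fintype o] [DecidableEq ς]
    [DecidableEq ς'] {B : Set (ℕ → o → 𝔽)} {G F : Matrix ι ς 𝔽}
    {H : Matrix o ς 𝔽} (h : IsMinimalPencilRep B G F H) (e₁ : ι' ≃ ι) (e₂ : ς' ≃ ς) :
    IsMinimalPencilRep B (G.submatrix e₁ e₂) (F.submatrix e₁ e₂) (H.submatrix id e₂) where
  eq_pencilBehavior := by rw [pencilBehavior_submatrix, h.eq_pencilBehavior]
  rank_eq := by rw [rank_submatrix, h.rank_eq, Fintype.card_congr e₁]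
  rank_fromRows_eq := by
    rw [fromRows_submatrix, Fintype.card_congr e₂, ← h.rank_fromRows_eq]
    exact rank_submatrix _ (Equiv.sumCongr e₁ (Equiv.refl o)) e₂
  rightPrime := by
    rw [pencil_submatrix]
    exact h.rightPrime.submatrix _ e₂

end Pencil

theorem Module.Basis.sumExtend_inl {K V ι : Type*} [DivisionRing K] [AddCommGroup V] [Module K V]
    {v : ι → V} (hv : LinearIndependent K v) (i : ι) : sumExtend hv (Sum.inl i) = v i := by
  simp only [sumExtend, reindex_apply, extend_apply_self]
  rfl

theorem exists_fromRows_mul_eq_one {𝔽 : Type} [Field 𝔽] {r n : ℕ} (Λ : Matrix (Fin r) (Fin n) 𝔽)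
    (hΛ : Λ.rank = r) :
    ∃ (M : Matrix (Fin (n - r)) (Fin n) 𝔽) (N : Matrix (Fin n) (Fin r ⊕ Fin (n - r)) 𝔽),
      fromRows Λ M * N = 1 ∧ N * fromRows Λ M = 1 := by
  have hli : LinearIndependent 𝔽 Λ.row := by
    rw [linearIndependent_iff_card_eq_finrank_span, Fintype.card_fin, Set.finrank,
      ← rank_eq_finrank_span_row, hΛ]
  set b := Module.Basis.sumExtend hli
  have : Finite (Fin r ⊕ Module.Basis.sumExtendIndex hli) := Module.Finite.finite_basis b
  have : Finite (Module.Basis.sumExtendIndex hli) :=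
    Finite.of_injective (Sum.inr (α := Fin r)) Sum.inr_injective
  have : Fintype (Module.Basis.sumExtendIndex hli) := Fintype.ofFinite _
  have hcard : Fintype.card (Module.Basis.sumExtendIndex hli) = n - r := by
    have := Module.finrank_eq_card_basis b
    rw [Module.finrank_fin_fun, Fintype.card_sum, Fintype.card_fin] at this
    omega
  set b' := b.reindex (Equiv.sumCongr (Equiv.refl _) (Fintype.equivFinOfCardEq hcard))
  set e := Pi.basisFun 𝔽 (Fin n)
  have hS : (fromRows Λ (Matrix.of fun j => b' (Sum.inr j)))ᵀ = e.toMatrix b' := by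
    ext j (i | i)
    · simp [e, b', b, Module.Basis.toMatrix_apply, Module.Basis.sumExtend_inl hli]
    · simp [e, Module.Basis.toMatrix_apply]
  refine ⟨Matrix.of fun j => b' (Sum.inr j), (b'.toMatrix e)ᵀ, ?_, ?_⟩
  · rw [← transpose_transpose (fromRows _ _), hS, ← transpose_mul,
      Module.Basis.toMatrix_mul_toMatrix_flip, transpose_one]
  · rw [← transpose_transpose (fromRows _ _), hS, ← transpose_mul,
      Module.Basis.toMatrix_mul_toMatrix_flip, transpose_one]

theorem Fin.decreasing_induction {m : ℕ} {P : Fin m → Prop}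
    (last : ∀ s : Fin m, s.val + 1 = m → P s)
    (step : ∀ (s : Fin m) (h : s.val + 1 < m), P ⟨s.val + 1, h⟩ → P s) (s : Fin m) : P s := by
  obtain ⟨s, hs⟩ := s
  induction h : m - (s + 1) generalizing s with
  | zero => exact last _ (by simp; omega)
  | succ d ih => exact step _ (by simp; omega) (ih _ _ (by simp; omega))

theorem eq_mulVec_iff_mulVec_eq {K m l : Type*} [CommRing K] [Fintype m] [Fintype l]
    [DecidableEq m] [DecidableEq l] {S : Matrix m l K} {N : Matrix l m K} (hSN : S * N = 1)
    (hNS : N * S = 1) {w : l → K} {y : m → K} : w = N *ᵥ y ↔ S *ᵥ w = y := by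
  constructor
  · rintro rfl; rw [mulVec_mulVec, hSN, one_mulVec]
  · rintro rfl; rw [mulVec_mulVec, hNS, one_mulVec]

section Realization

variable {𝔽 : Type} [Field 𝔽] {r n : ℕ} (R : Matrix (Fin r) (Fin n) 𝔽[X]) (κ : Type)

abbrev RowDegIdx : Type := Σ i : Fin r, Fin (rowDeg R i)

def prevState (p : RowDegIdx R) : Option (RowDegIdx R ⊕ κ) :=
  if 0 < p.2.val then some (.inl ⟨p.1, ⟨p.2.val - 1, (Nat.sub_le _ _).trans_lt p.2.isLt⟩⟩)
  else none

def lastState (i : Fin r) : Option (RowDegIdx R ⊕ κ) :=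
  if h : 0 < rowDeg R i then some (.inl ⟨i, ⟨rowDeg R i - 1, Nat.sub_lt h one_pos⟩⟩) else none

def coeffRows : Matrix (RowDegIdx R) (Fin n) 𝔽 := Matrix.of fun p j => (R p.1 j).coeff p.2

variable {R κ}

theorem prevState_succ {i : Fin r} (s : Fin (rowDeg R i)) (hs : s.val + 1 < rowDeg R i) :
    prevState R κ ⟨i, ⟨s + 1, hs⟩⟩ = some (.inl ⟨i, s⟩) := by
  simp [prevState]

theorem lastState_eq_some {i : Fin r} (s : Fin (rowDeg R i)) (hs : s.val + 1 = rowDeg R i) :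
    lastState R κ i = some (.inl ⟨i, s⟩) := by
  rw [lastState, dif_pos (by omega)]
  congr
  omega

theorem lastState_eq_none {i : Fin r} (h : rowDeg R i = 0) : lastState R κ i = none := by
  rw [lastState, dif_neg (by omega)]

theorem prevState_elim {A : Type*} [Zero A] (ζ : RowDegIdx R ⊕ κ → A) {x : Fin r → ℕ → A}
    (hx : ∀ i, x i 0 = 0) (hζ : ∀ p : RowDegIdx R, ζ (.inl p) = x p.1 (p.2 + 1))
    (p : RowDegIdx R) : (prevState R κ p).elim 0 ζ = x p.1 p.2 := by
  obtain ⟨i, ⟨_ | s, hs⟩⟩ := p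
  · simp [prevState, hx]
  · simp [prevState, hζ]

variable (R κ) [Fintype κ] [DecidableEq κ]

/-- `N` inverts `[leadRowCoeff R; M]`, so `w` is recovered from `leadRowCoeff R * w`, which is the
vector of last states `x_{i, νᵢ - 1}`, and from `M w`, which is the free part `v` of the state. -/
noncomputable def realizationH (N : Matrix (Fin n) (Fin r ⊕ κ) 𝔽) :
    Matrix (Fin n) (RowDegIdx R ⊕ κ) 𝔽 :=
  N * fromRows (selMatrix (lastState R κ) : Matrix (Fin r) _ 𝔽) (selMatrix fun j => some (.inr j))

def realizationG : Matrix (RowDegIdx R) (RowDegIdx R ⊕ κ) 𝔽 := selMatrix fun p => some (.inl p)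

noncomputable def realizationF (N : Matrix (Fin n) (Fin r ⊕ κ) 𝔽) :
    Matrix (RowDegIdx R) (RowDegIdx R ⊕ κ) 𝔽 :=
  selMatrix (prevState R κ) - coeffRows R * realizationH R κ N

variable {R κ}

theorem realizationG_mulVec (ζ : RowDegIdx R ⊕ κ → 𝔽) :
    realizationG R κ *ᵥ ζ = ζ ∘ .inl := by
  rw [realizationG, selMatrix_mulVec]; rfl

theorem realizationG_mulVec_eq_realizationF_mulVec_iff (N : Matrix (Fin n) (Fin r ⊕ κ) 𝔽)
    (ζ' ζ : RowDegIdx R ⊕ κ → 𝔽) :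
    realizationG R κ *ᵥ ζ' = realizationF R κ N *ᵥ ζ ↔ ∀ p, ζ' (.inl p)
      = (prevState R κ p).elim 0 ζ - (coeffRows R *ᵥ (realizationH R κ N *ᵥ ζ)) p := by
  rw [realizationG_mulVec, realizationF, sub_mulVec, selMatrix_mulVec, mulVec_mulVec, funext_iff]
  rfl

variable {M : Matrix κ (Fin n) 𝔽} {N : Matrix (Fin n) (Fin r ⊕ κ) 𝔽}

theorem fromRows_mul_realizationH (hSN : fromRows (leadRowCoeff R) M * N = 1) :
    fromRows (leadRowCoeff R) M * realizationH R κ N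
      = fromRows (selMatrix (lastState R κ)) (selMatrix fun j => some (.inr j)) := by
  rw [realizationH, ← Matrix.mul_assoc, hSN, Matrix.one_mul]

theorem eq_realizationH_mulVec_iff (hSN : fromRows (leadRowCoeff R) M * N = 1)
    (hNS : N * fromRows (leadRowCoeff R) M = 1) (w : Fin n → 𝔽) (ζ : RowDegIdx R ⊕ κ → 𝔽) :
    w = realizationH R κ N *ᵥ ζ ↔ leadRowCoeff R *ᵥ w = (fun i => (lastState R κ i).elim 0 ζ)
      ∧ M *ᵥ w = ζ ∘ .inr := by
  rw [realizationH, ← mulVec_mulVec, eq_mulVec_iff_mulVec_eq hSN hNS, fromRows_mulVec,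
    fromRows_mulVec, selMatrix_mulVec, selMatrix_mulVec, Sum.elim_eq_iff]
  rfl

theorem mem_pencilBehavior_of_pSigmaPlus_eq_zero (hSN : fromRows (leadRowCoeff R) M * N = 1)
    (hNS : N * fromRows (leadRowCoeff R) M = 1) {w : ℕ → Fin n → 𝔽} (hw : pSigmaPlus R w = 0) :
    w ∈ pencilBehavior (realizationG R κ) (realizationF R κ N) (realizationH R κ N) := by
  set ζ : ℕ → RowDegIdx R ⊕ κ → 𝔽 :=
    fun t => Sum.elim (fun p => tailSeq R w p.1 (p.2 + 1) t) (M *ᵥ w t)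
  have hout (t : ℕ) : w t = realizationH R κ N *ᵥ ζ t := by
    rw [eq_realizationH_mulVec_iff hSN hNS]
    refine ⟨funext fun i => ?_, rfl⟩
    rw [← tailSeq_rowDeg]
    by_cases h : 0 < rowDeg R i
    · rw [lastState_eq_some ⟨rowDeg R i - 1, by omega⟩ (by simp; omega)]
      simp only [Option.elim_some, ζ, Sum.elim_inl, Nat.sub_add_cancel h]
    · rw [lastState_eq_none (by omega), Nat.eq_zero_of_not_pos h, tailSeq_zero, hw]
      rfl
  refine ⟨ζ, fun t => ⟨?_, hout t⟩⟩
  rw [realizationG_mulVec_eq_realizationF_mulVec_iff, ← hout]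
  intro p
  rw [prevState_elim (ζ t) (x := fun i s => tailSeq R w i s t)
    (fun i => by rw [tailSeq_zero, hw]; rfl) (fun _ => rfl), tailSeq_eq_add]
  simp only [ζ, Sum.elim_inl]
  exact (add_sub_cancel_left _ _).symm

theorem realization_state_eq_tailSeq (hSN : fromRows (leadRowCoeff R) M * N = 1)
    (hNS : N * fromRows (leadRowCoeff R) M = 1) {w : ℕ → Fin n → 𝔽}
    {ζ : ℕ → RowDegIdx R ⊕ κ → 𝔽} (hζ : ∀ t, realizationG R κ *ᵥ ζ (t + 1)
      = realizationF R κ N *ᵥ ζ t ∧ w t = realizationH R κ N *ᵥ ζ t)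
    (p : RowDegIdx R) (t : ℕ) : ζ t (.inl p) = tailSeq R w p.1 (p.2 + 1) t := by
  obtain ⟨i, s⟩ := p
  revert t
  induction s using Fin.decreasing_induction with
  | last s hs =>
    intro t
    have h := congrFun ((eq_realizationH_mulVec_iff hSN hNS _ _).1 (hζ t).2).1 i
    rw [lastState_eq_some s hs, Option.elim_some] at h
    rw [← h, hs, tailSeq_rowDeg]
  | step s hs ih =>
    intro t
    have h := (realizationG_mulVec_eq_realizationF_mulVec_iff N _ _).1 (hζ t).1 ⟨i, ⟨s + 1, hs⟩⟩
    rw [← (hζ t).2, ih (t + 1)] at h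
    rw [prevState_succ s hs, Option.elim_some] at h
    rw [tailSeq_eq_add, h]
    exact (add_sub_cancel _ _).symm

theorem pSigmaPlus_eq_zero_of_mem_pencilBehavior (hSN : fromRows (leadRowCoeff R) M * N = 1)
    (hNS : N * fromRows (leadRowCoeff R) M = 1) {w : ℕ → Fin n → 𝔽}
    (hw : w ∈ pencilBehavior (realizationG R κ) (realizationF R κ N) (realizationH R κ N)) :
    pSigmaPlus R w = 0 := by
  obtain ⟨ζ, hζ⟩ := hw
  funext t i
  rw [← tailSeq_zero]
  by_cases h : 0 < rowDeg R i
  · have h0 := (realizationG_mulVec_eq_realizationF_mulVec_iff N _ _).1 (hζ t).1 ⟨i, ⟨0, h⟩⟩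
    rw [← (hζ t).2, realization_state_eq_tailSeq hSN hNS hζ] at h0
    rw [tailSeq_eq_add, h0]
    simp [prevState, coeffRows, mulVec, dotProduct]
  · have hout := congrFun ((eq_realizationH_mulVec_iff hSN hNS _ _).1 (hζ t).2).1 i
    rw [lastState_eq_none (by omega)] at hout
    rw [← Nat.eq_zero_of_not_pos h, tailSeq_rowDeg, hout]
    rfl

theorem rank_realizationG :
    (realizationG R κ : Matrix _ _ 𝔽).rank = Fintype.card (RowDegIdx R) := by
  have hsurj : Function.Surjective (realizationG R κ : Matrix _ _ 𝔽).mulVecLin := fun y =>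
    ⟨Sum.elim y 0, by rw [mulVecLin_apply, realizationG_mulVec]; rfl⟩
  rw [Matrix.rank, LinearMap.range_eq_top.mpr hsurj, finrank_top,
    Module.finrank_fintype_fun_eq_card]

theorem rank_fromRows_realizationG_realizationH (hSN : fromRows (leadRowCoeff R) M * N = 1)
    (hNS : N * fromRows (leadRowCoeff R) M = 1) :
    (fromRows (realizationG R κ) (realizationH R κ N)).rank
      = Fintype.card (RowDegIdx R ⊕ κ) := by
  have hinr (ζ : RowDegIdx R ⊕ κ → 𝔽) : M *ᵥ (realizationH R κ N *ᵥ ζ) = ζ ∘ .inr :=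
    ((eq_realizationH_mulVec_iff hSN hNS _ ζ).1 rfl).2
  have hinj : Function.Injective (fromRows (realizationG R κ) (realizationH R κ N)).mulVecLin := by
    intro ζ ζ' h
    simp only [mulVecLin_apply, fromRows_mulVec, Sum.elim_eq_iff, realizationG_mulVec] at h
    rw [← Sum.elim_comp_inl_inr ζ, ← Sum.elim_comp_inl_inr ζ', h.1, ← hinr, h.2, hinr]
  rw [Matrix.rank, LinearMap.finrank_range_of_inj hinj, Module.finrank_fintype_fun_eq_card]

theorem selMatrix_row_mem_span_pencil_realization {k : Type} [Fintype k] {Y : Matrix k (Fin n) 𝔽}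
    {f : k → Option (RowDegIdx R ⊕ κ)} (hY : Y * realizationH R κ N = selMatrix f) (j : k) :
    (selMatrix f : Matrix _ _ 𝔽[X]) j ∈ Submodule.span 𝔽[X]
      (Set.range (pencil (realizationG R κ) (realizationF R κ N) (realizationH R κ N))) := by
  rw [← selMatrix_map f C, ← hY]
  exact map_mul_row_mem_span_pencil _ _ _ Y j

theorem X_smul_single_sub_single_mem_span_pencil_realization {i : Fin r} (s : Fin (rowDeg R i))
    (hs : s.val + 1 < rowDeg R i) :
    X • Pi.single (.inl ⟨i, ⟨s + 1, hs⟩⟩) 1 - Pi.single (.inl ⟨i, s⟩) 1 ∈ Submodule.span 𝔽[X]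
      (Set.range (pencil (realizationG R κ) (realizationF R κ N) (realizationH R κ N))) := by
  set G' : Matrix (RowDegIdx R) (RowDegIdx R ⊕ κ) 𝔽[X] := selMatrix fun q => some (.inl q)
  set A' : Matrix (RowDegIdx R) (RowDegIdx R ⊕ κ) 𝔽[X] := selMatrix (prevState R κ)
  have hmat : (X : 𝔽[X]) • G' - A'
      = ((X : 𝔽[X]) • (realizationG R κ).map (fun a => (C a : 𝔽[X]))
        - (realizationF R κ N).map (fun a => (C a : 𝔽[X])))
        - (coeffRows R * realizationH R κ N).map (fun a => (C a : 𝔽[X])) := by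
    rw [realizationF, Matrix.map_sub _ (fun _ _ => C_sub), realizationG, selMatrix_map,
      selMatrix_map]
    abel
  have hG' : G' ⟨i, ⟨s + 1, hs⟩⟩ = Pi.single (.inl ⟨i, ⟨s + 1, hs⟩⟩) 1 :=
    selMatrix_row_of_eq_some rfl
  have hA' : A' ⟨i, ⟨s + 1, hs⟩⟩ = Pi.single (.inl ⟨i, s⟩) 1 :=
    selMatrix_row_of_eq_some (prevState_succ s hs)
  rw [← hG', ← hA']
  change ((X : 𝔽[X]) • G' - A') ⟨i, ⟨s + 1, hs⟩⟩ ∈ _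
  rw [hmat]
  exact Submodule.sub_mem _ (Submodule.subset_span ⟨.inl _, rfl⟩)
    (map_mul_row_mem_span_pencil _ _ _ _ _)

theorem rightPrime_pencil_realization (hSN : fromRows (leadRowCoeff R) M * N = 1) :
    RightPrime (pencil (realizationG R κ) (realizationF R κ N) (realizationH R κ N)) := by
  have hsplit := fromRows_mul_realizationH (κ := κ) hSN
  rw [fromRows_mul] at hsplit
  obtain ⟨hlead, hM⟩ := fromRows_inj hsplit
  apply rightPrime_of_single_mem_span
  rintro (⟨i, s⟩ | j)
  · induction s using Fin.decreasing_induction with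
    | last s hs =>
      have := selMatrix_row_mem_span_pencil_realization hlead i
      rwa [selMatrix_row_of_eq_some (lastState_eq_some s hs)] at this
    | step s hs ih =>
      have := Submodule.sub_mem _ (Submodule.smul_mem _ X ih)
        (X_smul_single_sub_single_mem_span_pencil_realization s hs)
      rwa [sub_sub_cancel] at this
  · have := selMatrix_row_mem_span_pencil_realization hM j
    rwa [selMatrix_row_of_eq_some (f := fun j : κ => some (Sum.inr (α := RowDegIdx R) j)) rfl]
      at this

theorem isMinimalPencilRep_realization (hSN : fromRows (leadRowCoeff R) M * N = 1)
    (hNS : N * fromRows (leadRowCoeff R) M = 1) :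
    IsMinimalPencilRep { w | pSigmaPlus R w = 0 } (realizationG R κ) (realizationF R κ N)
      (realizationH R κ N) where
  eq_pencilBehavior := Set.ext fun _ => ⟨mem_pencilBehavior_of_pSigmaPlus_eq_zero hSN hNS,
    pSigmaPlus_eq_zero_of_mem_pencilBehavior hSN hNS⟩
  rank_eq := rank_realizationG
  rank_fromRows_eq := rank_fromRows_realizationG_realizationH hSN hNS
  rightPrime := rightPrime_pencil_realization hSN

end Realization

theorem first_order_representation_behavior_general
    (𝔽 : Type) [Field 𝔽] (r n : ℕ)
    (P : Matrix (Fin r) (Fin n) (Polynomial 𝔽))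
    (B : Set (ℕ → Fin n → 𝔽)) (hB : B = { w : ℕ → Fin n → 𝔽 | pSigmaPlus P w = 0 })
    -- the McMillan degree `δ` of `B`, computed from any row-reduced kernel representation
    (U : Matrix (Fin r) (Fin r) (Polynomial 𝔽)) (hU : IsUnit U)
    (hUP : RowReduced (U * P))
    (δ : ℕ) (hδ : δ = ∑ i : Fin r, rowDeg (U * P) i) :
    ∃ (G F₀ : Matrix (Fin δ) (Fin (δ + (n - r))) 𝔽)
      (H : Matrix (Fin n) (Fin (δ + (n - r))) 𝔽),
      B = { w : ℕ → Fin n → 𝔽 | ∃ ζ : ℕ → Fin (δ + (n - r)) → 𝔽,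
        ∀ t : ℕ, G.mulVec (ζ (t + 1)) = F₀.mulVec (ζ t) ∧ w t = H.mulVec (ζ t) } ∧
      G.rank = δ ∧
      (Matrix.fromRows G H).rank = δ + (n - r) ∧
      RightPrime (Matrix.fromRows
        ((Polynomial.X : Polynomial 𝔽) • G.map (fun a => (Polynomial.C a : Polynomial 𝔽)) -
          F₀.map (fun a => (Polynomial.C a : Polynomial 𝔽)))
        (H.map (fun a => (Polynomial.C a : Polynomial 𝔽)))) := by
  obtain ⟨M, N, hSN, hNS⟩ := exists_fromRows_mul_eq_one (leadRowCoeff (U * P)) hUP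
  have hker : B = { w | pSigmaPlus (U * P) w = 0 } := by
    rw [hB]
    exact Set.ext fun w => (pSigmaPlus_mul_eq_zero_iff_of_isUnit hU P w).symm
  have hcard : Fintype.card (RowDegIdx (U * P)) = δ := by simp [hδ]
  set e₁ := Fintype.equivFinOfCardEq hcard
  set e₂ := (Equiv.sumCongr e₁ (Equiv.refl (Fin (n - r)))).trans finSumFinEquiv
  have h := (isMinimalPencilRep_realization hSN hNS).submatrix e₁.symm e₂.symm
  exact ⟨_, _, _, hker.trans h.eq_pencilBehavior, by simpa using h.rank_eq,
    by simpa using h.rank_fromRows_eq, h.rightPrime⟩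

/-- Existence of first-order representations of behaviors: a kernel behavior
`B = ker P(σ) ⊆ (𝔽^n)^{ℤ₊}` of McMillan degree `δ` admits a minimal first-order (pencil)
representation `(σG − F)ζ = 0`, `w = Hζ` by constant matrices `G, F, H`. -/
theorem first_order_representation_behavior
    (𝔽 : Type) [Field 𝔽] [Fintype 𝔽] (r n : ℕ)
    (P : Matrix (Fin r) (Fin n) (Polynomial 𝔽))
    (hP : LinearIndependent (Polynomial 𝔽) P)
    (B : Set (ℕ → Fin n → 𝔽)) (hB : B = { w : ℕ → Fin n → 𝔽 | pSigmaPlus P w = 0 })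
    -- the McMillan degree `δ` of `B`, computed from any row-reduced kernel representation
    (U : Matrix (Fin r) (Fin r) (Polynomial 𝔽)) (hU : IsUnit U)
    (hUP : RowReduced (U * P))
    (δ : ℕ) (hδ : δ = ∑ i : Fin r, rowDeg (U * P) i) :
    ∃ (G F₀ : Matrix (Fin δ) (Fin (δ + (n - r))) 𝔽)
      (H : Matrix (Fin n) (Fin (δ + (n - r))) 𝔽),
      B = { w : ℕ → Fin n → 𝔽 | ∃ ζ : ℕ → Fin (δ + (n - r)) → 𝔽,
        ∀ t : ℕ, G.mulVec (ζ (t + 1)) = F₀.mulVec (ζ t) ∧ w t = H.mulVec (ζ t) } ∧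
      G.rank = δ ∧
      (Matrix.fromRows G H).rank = δ + (n - r) ∧
      RightPrime (Matrix.fromRows
        ((Polynomial.X : Polynomial 𝔽) • G.map (fun a => (Polynomial.C a : Polynomial 𝔽)) -
          F₀.map (fun a => (Polynomial.C a : Polynomial 𝔽)))
        (H.map (fun a => (Polynomial.C a : Polynomial 𝔽)))) :=
  first_order_representation_behavior_general 𝔽 r n P B hB U hU hUP δ hδ
end
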